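/- arXiv:2010.08001 — 5 statements merged into one kernel-verified Lean document; each statement's English description precedes it below -/
import Mathlib

section
/- Let 𝒯 be a finite type, let 𝒳 be a type, let m be a natural number with m ≥ 2, and let q : 𝒳 → (𝒯 → ℝ) be a fixed channel such that q x is a pmf on 𝒯 for every x ∈ 𝒳. For a sample vector v : Fin m → 𝒳, define the plug-in entropy estimate Ĥ(v) = H(t ↦ (1/m) * ∑_{i} q (v i) t). If two sample vectors v, v' : Fin m → 𝒳 differ in exactly one coordinate (i.e. there exists j with v i = v' i for all i ≠ j), then |Ĥ(v) − Ĥ(v')| ≤ (card 𝒯) * Real.log m / m. -/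
open Real Finset

/-- Pointwise Gibbs inequality: `z - c ≤ -negMulLog z - z * log c` for `z ≥ 0`, `c > 0`. -/
private lemma gibbs_aux {z c : ℝ} (hz : 0 ≤ z) (hc : 0 < c) :
    z - c ≤ -Real.negMulLog z - z * Real.log c := by
  rcases eq_or_lt_of_le hz with h | h
  · simp [← h]; linarith
  · have hlog : Real.log (c / z) ≤ c / z - 1 :=
      Real.log_le_sub_one_of_pos (by positivity)
    rw [Real.log_div (ne_of_gt hc) (ne_of_gt h)] at hlog
    have h2 := mul_le_mul_of_nonneg_left hlog (le_of_lt h)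
    have h3 : z * (c / z) = c := by field_simp
    simp only [Real.negMulLog, neg_mul, neg_neg]
    nlinarith

/-- Subadditivity of `negMulLog` on nonnegative reals. -/
private lemma nml_add_le {a b : ℝ} (ha : 0 ≤ a) (hb : 0 ≤ b) :
    Real.negMulLog (a + b) ≤ Real.negMulLog a + Real.negMulLog b := by
  rcases eq_or_lt_of_le ha with h | h
  · simp [← h]
  rcases eq_or_lt_of_le hb with h' | h'
  · simp [← h']
  have h1 : Real.log a ≤ Real.log (a + b) := Real.log_le_log h (by linarith)
  have h2 : Real.log b ≤ Real.log (a + b) := Real.log_le_log h' (by linarith)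
  simp only [Real.negMulLog, neg_mul]
  nlinarith [mul_le_mul_of_nonneg_left h1 (le_of_lt h), mul_le_mul_of_nonneg_left h2 (le_of_lt h')]

/-- Superadditivity of the entropy sum. -/
private lemma nml_sum_ge {T : Type*} (s : Finset T) (z : T → ℝ) (hz : ∀ t ∈ s, 0 ≤ z t) :
    Real.negMulLog (∑ t ∈ s, z t) ≤ ∑ t ∈ s, Real.negMulLog (z t) := by
  induction s using Finset.cons_induction with
  | empty => simp
  | cons a s ha ih =>
    rw [Finset.sum_cons, Finset.sum_cons]
    have h1 : Real.negMulLog (z a + ∑ t ∈ s, z t) ≤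
        Real.negMulLog (z a) + Real.negMulLog (∑ t ∈ s, z t) :=
      nml_add_le (hz a (Finset.mem_cons_self _ _))
        (Finset.sum_nonneg fun t ht => hz t (Finset.mem_cons.2 (Or.inr ht)))
    have h2 := ih (fun t ht => hz t (Finset.mem_cons.2 (Or.inr ht)))
    linarith

/-- Entropy sum bound: `∑ negMulLog (z t) ≤ negMulLog r + r * log (card s)` where `r = ∑ z`. -/
private lemma nml_sum_le {T : Type*} (s : Finset T) (z : T → ℝ) (hz : ∀ t ∈ s, 0 ≤ z t) :
    ∑ t ∈ s, Real.negMulLog (z t) ≤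
      Real.negMulLog (∑ t ∈ s, z t) + (∑ t ∈ s, z t) * Real.log s.card := by
  set r := ∑ t ∈ s, z t with hr
  have hr0 : 0 ≤ r := Finset.sum_nonneg hz
  rcases eq_or_lt_of_le hr0 with h | h
  · have hzero : ∀ t ∈ s, z t = 0 := (Finset.sum_eq_zero_iff_of_nonneg hz).1 h.symm
    have : ∑ t ∈ s, Real.negMulLog (z t) = 0 := Finset.sum_eq_zero fun t ht => by
      rw [hzero t ht]; simp
    rw [this, ← h]; simp
  · have hs : s.Nonempty := by
      rcases Finset.eq_empty_or_nonempty s with he | hne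
      · exfalso; rw [he] at hr; simp [hr] at h
      · exact hne
    have hn : (0 : ℝ) < s.card := by
      have := Finset.card_pos.2 hs; exact_mod_cast this
    have key : ∀ t ∈ s, Real.negMulLog (z t) ≤
        z t * (Real.log s.card - Real.log r) - z t + r / s.card := by
      intro t ht
      have h1 := gibbs_aux (hz t ht) (show (0:ℝ) < r / s.card by positivity)
      have h2 : Real.log (r / s.card) = Real.log r - Real.log s.card :=
        Real.log_div (ne_of_gt h) (ne_of_gt hn)
      rw [h2] at h1
      nlinarith [h1]
    calc ∑ t ∈ s, Real.negMulLog (z t)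
        ≤ ∑ t ∈ s, (z t * (Real.log s.card - Real.log r) - z t + r / s.card) :=
          Finset.sum_le_sum key
      _ = r * (Real.log s.card - Real.log r) - r + s.card * (r / s.card) := by
          rw [Finset.sum_add_distrib, Finset.sum_sub_distrib, ← Finset.sum_mul,
            Finset.sum_const, nsmul_eq_mul, ← hr]
      _ = Real.negMulLog r + r * Real.log s.card := by
          have : (s.card : ℝ) * (r / s.card) = r := by field_simp
          rw [this]; simp only [Real.negMulLog, neg_mul]; ring

/-- `negMulLog (1 - d) ≤ negMulLog d` for `d ∈ [0, 1/2]`. -/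
private lemma nml_one_sub_le {d : ℝ} (hd0 : 0 ≤ d) (hd : d ≤ 1/2) :
    Real.negMulLog (1 - d) ≤ Real.negMulLog d := by
  rcases eq_or_lt_of_le hd0 with h | h
  · simp [← h]
  have h1d : (0:ℝ) < 1 - d := by linarith
  have hA : 1 - (d / (1 - d)) ≤ Real.log ((1 - d) / d) := by
    have := Real.one_sub_inv_le_log_of_pos (show (0:ℝ) < (1-d)/d by positivity)
    have he : ((1-d)/d)⁻¹ = d / (1-d) := by
      rw [inv_div]
    rwa [he] at this
  have hB : Real.log ((1:ℝ) / (1 - d)) ≤ 1 / (1 - d) - 1 :=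
    Real.log_le_sub_one_of_pos (by positivity)
  have hB' : -Real.log (1 - d) ≤ d / (1 - d) := by
    rw [Real.log_div one_ne_zero (ne_of_gt h1d), Real.log_one] at hB
    have : (1:ℝ) / (1-d) - 1 = d / (1-d) := by field_simp; ring
    linarith [hB, this.symm.le, this.le]
  have hlogd : Real.log d = Real.log (1 - d) - Real.log ((1 - d) / d) := by
    rw [Real.log_div (ne_of_gt h1d) (ne_of_gt h)]; ring
  simp only [Real.negMulLog, neg_mul]
  rw [hlogd]
  -- goal: -((1-d) * log(1-d)) ≤ -(d * (log(1-d) - log((1-d)/d)))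
  -- equivalent: (1-2d) * (-log(1-d)) ≤ d * log((1-d)/d)
  have h12 : 0 ≤ 1 - 2*d := by linarith
  have k1 : (1 - 2*d) * (-Real.log (1 - d)) ≤ (1 - 2*d) * (d / (1 - d)) :=
    mul_le_mul_of_nonneg_left hB' h12
  have k2 : d * (1 - d / (1 - d)) ≤ d * Real.log ((1 - d) / d) :=
    mul_le_mul_of_nonneg_left hA hd0
  have e1 : d * (1 - d / (1 - d)) = (1 - 2*d) * (d / (1 - d)) := by
    field_simp; ring
  nlinarith [k1, k2]

/-- Two-point majorization inequality for the concave function `negMulLog`. -/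
private lemma concave_pair {a b a' b' : ℝ} (ha : 0 ≤ a) (haa' : a ≤ a') (hab' : a ≤ b')
    (ha'b : a' ≤ b) (hb'b : b' ≤ b) (hsum : a + b = a' + b') :
    Real.negMulLog a + Real.negMulLog b ≤ Real.negMulLog a' + Real.negMulLog b' := by
  have hb0 : 0 ≤ b := le_trans ha (le_trans haa' ha'b)
  rcases eq_or_lt_of_le (le_trans haa' ha'b) with h | h
  · -- a = b forces a' = a, b' = a
    have ha'a : a' = a := le_antisymm (h ▸ ha'b) haa'
    have hb'a : b' = a := by linarith
    rw [ha'a, hb'a, ← h]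
  · set μ := (a' - a) / (b - a) with hμ
    have hba : 0 < b - a := by linarith
    have hμ0 : 0 ≤ μ := div_nonneg (by linarith) (le_of_lt hba)
    have hμ1 : μ ≤ 1 := by
      rw [hμ, div_le_one hba]; linarith
    have hmema : a ∈ Set.Ici (0:ℝ) := ha
    have hmemb : b ∈ Set.Ici (0:ℝ) := hb0
    have e1 : (1 - μ) * a + μ * b = a' := by
      have hμb : μ * (b - a) = a' - a := by rw [hμ]; exact div_mul_cancel₀ _ (ne_of_gt hba)
      linear_combination hμb
    have e2 : μ * a + (1 - μ) * b = b' := by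
      have : μ * a + (1 - μ) * b = a + b - ((1 - μ) * a + μ * b) := by ring
      rw [this, e1]; linarith
    have c1 := Real.concaveOn_negMulLog.2 hmema hmemb (by linarith : (0:ℝ) ≤ 1 - μ) hμ0
      (by ring : (1 - μ) + μ = 1)
    have c2 := Real.concaveOn_negMulLog.2 hmema hmemb hμ0 (by linarith : (0:ℝ) ≤ 1 - μ)
      (by ring : μ + (1 - μ) = 1)
    simp only [smul_eq_mul] at c1 c2
    rw [e1] at c1
    rw [e2] at c2
    linarith

/-- Key pointwise bound: `|negMulLog u - negMulLog v| ≤ negMulLog |u - v|` for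
`u, v ∈ [0,1]` with `|u - v| ≤ 1/2`. -/
private lemma nml_abs_sub_le_aux {u v : ℝ} (hv0 : 0 ≤ v) (hu1 : u ≤ 1)
    (huv : v ≤ u) (hd : u - v ≤ 1/2) :
    |Real.negMulLog u - Real.negMulLog v| ≤ Real.negMulLog (u - v) := by
  have hd0 : 0 ≤ u - v := by linarith
  rw [abs_le]
  constructor
  · -- negMulLog v - negMulLog u ≤ negMulLog (u - v)
    have h1 : Real.negMulLog v + Real.negMulLog 1 ≤
        Real.negMulLog u + Real.negMulLog (1 - (u - v)) := by
      apply concave_pair hv0 huv (by linarith) hu1 (by linarith) (by ring)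
    have h2 : Real.negMulLog (1 - (u - v)) ≤ Real.negMulLog (u - v) :=
      nml_one_sub_le hd0 hd
    simp only [Real.negMulLog_one] at h1
    linarith
  · -- negMulLog u - negMulLog v ≤ negMulLog (u - v)
    have h1 : Real.negMulLog (v + (u - v)) ≤ Real.negMulLog v + Real.negMulLog (u - v) :=
      nml_add_le hv0 hd0
    have he : v + (u - v) = u := by ring
    rw [he] at h1
    linarith

private lemma nml_abs_sub_le {u v : ℝ} (hu0 : 0 ≤ u) (hu1 : u ≤ 1) (hv0 : 0 ≤ v) (hv1 : v ≤ 1)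
    (hd : |u - v| ≤ 1/2) :
    |Real.negMulLog u - Real.negMulLog v| ≤ Real.negMulLog |u - v| := by
  rcases le_total v u with h | h
  · rw [abs_of_nonneg (by linarith : (0:ℝ) ≤ u - v)] at hd ⊢
    exact nml_abs_sub_le_aux hv0 hu1 h hd
  · rw [abs_sub_comm u v, abs_of_nonneg (by linarith : (0:ℝ) ≤ v - u)] at hd ⊢
    rw [abs_sub_comm]
    exact nml_abs_sub_le_aux hu0 hv1 h hd

/-- Monotonicity of `negMulLog` on `[0, 1/e]`: if `log t ≤ -1` then `negMulLog` is
monotone up to `t`. -/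
private lemma nml_mono {s t : ℝ} (hs : 0 ≤ s) (hst : s ≤ t) (ht : Real.log t ≤ -1) :
    Real.negMulLog s ≤ Real.negMulLog t := by
  rcases eq_or_lt_of_le hs with h | h
  · rw [← h, Real.negMulLog_zero]
    simp only [Real.negMulLog, neg_mul]
    nlinarith [le_trans hs hst]
  have ht0 : 0 < t := lt_of_lt_of_le h hst
  have hlog : Real.log (t / s) ≤ t / s - 1 := Real.log_le_sub_one_of_pos (by positivity)
  have e : Real.log s = Real.log t - Real.log (t / s) := by
    rw [Real.log_div (ne_of_gt ht0) (ne_of_gt h)]; ring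
  have h1 := mul_le_mul_of_nonneg_left hlog (le_of_lt h)
  have h2 : s * (t / s) = t := by field_simp
  have h3 : (t - s) * (Real.log t + 1) ≤ 0 :=
    mul_nonpos_of_nonneg_of_nonpos (by linarith) (by linarith)
  simp only [Real.negMulLog, neg_mul]
  rw [e]
  nlinarith [h1, h3]

/-- The hard case: two pmfs on a type of cardinality 3 whose coordinates differ
by at most `1/2` have entropies differing by at most `(3/2) log 2`. -/
private lemma card3_bound {T : Type*} [Fintype T] (hK : Fintype.card T = 3)
    (x y : T → ℝ) (hx0 : ∀ t, 0 ≤ x t) (hx1 : ∑ t, x t = 1)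
    (hy0 : ∀ t, 0 ≤ y t) (hy1 : ∑ t, y t = 1)
    (hxy : ∀ t, |x t - y t| ≤ 1/2) :
    ∑ t, Real.negMulLog (x t) - ∑ t, Real.negMulLog (y t) ≤ 3 * Real.log 2 / 2 := by
  classical
  have hne : (Finset.univ : Finset T).Nonempty := by
    rw [← Finset.card_pos, Finset.card_univ, hK]; norm_num
  obtain ⟨t0, ht0⟩ : ∃ t0 : T, 1/3 ≤ y t0 := by
    by_contra hcon
    push_neg at hcon
    have : ∑ t, y t < ∑ _t : T, (1/3 : ℝ) :=
      Finset.sum_lt_sum_of_nonempty hne (fun t _ => hcon t)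
    rw [hy1, Finset.sum_const, Finset.card_univ, hK] at this
    norm_num at this
  set u := x t0 with hu
  set b := y t0 with hb
  have hx1' : ∀ t, x t ≤ 1 := by
    intro t
    calc x t ≤ ∑ t', x t' := Finset.single_le_sum (fun t' _ => hx0 t') (Finset.mem_univ t)
      _ = 1 := hx1
  have hy1' : ∀ t, y t ≤ 1 := by
    intro t
    calc y t ≤ ∑ t', y t' := Finset.single_le_sum (fun t' _ => hy0 t') (Finset.mem_univ t)
      _ = 1 := hy1
  have hu0 : 0 ≤ u := hx0 t0
  have hu1 : u ≤ 1 := hx1' t0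
  have hb1 : b ≤ 1 := hy1' t0
  have hb0 : 0 ≤ b := hy0 t0
  have hxsum : ∑ t ∈ Finset.univ.erase t0, x t = 1 - u := by
    rw [Finset.sum_erase_eq_sub (Finset.mem_univ t0), hx1]
  have hysum : ∑ t ∈ Finset.univ.erase t0, y t = 1 - b := by
    rw [Finset.sum_erase_eq_sub (Finset.mem_univ t0), hy1]
  have hcard : (Finset.univ.erase t0).card = 2 := by
    rw [Finset.card_erase_of_mem (Finset.mem_univ t0), Finset.card_univ, hK]
  have hHx : ∑ t, Real.negMulLog (x t) ≤
      Real.negMulLog u + (Real.negMulLog (1 - u) + (1 - u) * Real.log 2) := by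
    rw [← Finset.add_sum_erase _ _ (Finset.mem_univ t0)]
    have := nml_sum_le (Finset.univ.erase t0) x (fun t _ => hx0 t)
    rw [hxsum, hcard] at this
    norm_num at this ⊢
    linarith
  have hHy : Real.negMulLog b + Real.negMulLog (1 - b) ≤ ∑ t, Real.negMulLog (y t) := by
    rw [← Finset.add_sum_erase _ _ (Finset.mem_univ t0)]
    have := nml_sum_ge (Finset.univ.erase t0) y (fun t _ => hy0 t)
    rw [hysum] at this
    linarith
  have hlog2 : (0:ℝ) ≤ Real.log 2 := Real.log_nonneg one_le_two
  rcases le_or_gt b (1/2) with hbc | hbc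
  · -- b ∈ [1/3, 1/2] : use Hx ≤ log 3, Hy ≥ negMulLog (1-b) ≥ (1/2)(log 3 - log 2)
    have hlog3 : Real.negMulLog u + (Real.negMulLog (1 - u) + (1 - u) * Real.log 2) ≤
        Real.log 3 := by
      have g1 := gibbs_aux hu0 (show (0:ℝ) < 1/3 by norm_num)
      have g2 := gibbs_aux (show (0:ℝ) ≤ 1 - u by linarith) (show (0:ℝ) < 2/3 by norm_num)
      have e1 : Real.log ((1:ℝ)/3) = -Real.log 3 := by
        rw [one_div, Real.log_inv]
      have e2 : Real.log ((2:ℝ)/3) = Real.log 2 - Real.log 3 :=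
        Real.log_div two_ne_zero (by norm_num)
      rw [e1] at g1
      rw [e2] at g2
      nlinarith [g1, g2]
    have hfb : (1/2 : ℝ) * (Real.log 3 - Real.log 2) ≤ Real.negMulLog (1 - b) := by
      have h1 : (1:ℝ)/2 ≤ 1 - b := by linarith
      have h2 : Real.log (1 - b) ≤ Real.log ((2:ℝ)/3) := by
        apply Real.log_le_log (by linarith); linarith
      have e2 : Real.log ((2:ℝ)/3) = Real.log 2 - Real.log 3 :=
        Real.log_div two_ne_zero (by norm_num)
      rw [e2] at h2
      simp only [Real.negMulLog, neg_mul]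
      have hlog32 : 0 ≤ Real.log 3 - Real.log 2 := by
        have := Real.log_le_log (show (0:ℝ) < 2 by norm_num) (show (2:ℝ) ≤ 3 by norm_num)
        linarith
      nlinarith [h1, h2, hlog32]
    have hnnb : 0 ≤ Real.negMulLog b := Real.negMulLog_nonneg hb0 hb1
    have hl34 : Real.log 3 ≤ 2 * Real.log 2 := by
      have : (2:ℝ) * Real.log 2 = Real.log 4 := by
        rw [show (4:ℝ) = 2^2 by norm_num, Real.log_pow]; push_cast; ring
      rw [this]
      exact Real.log_le_log (by norm_num) (by norm_num)
    linarith
  · -- b > 1/2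
    have hub : b - u ≤ 1/2 := by
      have := hxy t0
      rw [abs_le] at this
      linarith [this.1]
    have hH2 : Real.negMulLog u + Real.negMulLog (1 - u) ≤ Real.log 2 := by
      have g1 := gibbs_aux hu0 (show (0:ℝ) < 1/2 by norm_num)
      have g2 := gibbs_aux (show (0:ℝ) ≤ 1 - u by linarith) (show (0:ℝ) < 1/2 by norm_num)
      have e1 : Real.log ((1:ℝ)/2) = -Real.log 2 := by
        rw [one_div, Real.log_inv]
      rw [e1] at g1 g2
      nlinarith [g1, g2]
    have hfb : (1 - b) * Real.log 2 ≤ Real.negMulLog (1 - b) := by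
      rcases eq_or_lt_of_le (show (0:ℝ) ≤ 1 - b by linarith) with h | h
      · rw [← h]; simp
      · have h2 : Real.log (1 - b) ≤ Real.log ((1:ℝ)/2) := by
          apply Real.log_le_log h; linarith
        rw [one_div, Real.log_inv] at h2
        simp only [Real.negMulLog, neg_mul]
        nlinarith [h2, h]
    have hnnb : 0 ≤ Real.negMulLog b := Real.negMulLog_nonneg hb0 hb1
    have hkey : (1 - u) * Real.log 2 ≤ (1/2) * Real.log 2 + (1 - b) * Real.log 2 := by
      have : (1 - u) ≤ 1/2 + (1 - b) := by linarith
      nlinarith [this, hlog2]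
    linarith

/-- `n^2 ≤ 2^n` for `n ≥ 4`. -/
private lemma sq_le_two_pow {n : ℕ} (hn : 4 ≤ n) : n^2 ≤ 2^n := by
  induction n, hn using Nat.le_induction with
  | base => norm_num
  | succ k hk ih =>
    have h2 : 2*k + 1 ≤ k^2 := by nlinarith
    calc (k+1)^2 = k^2 + (2*k+1) := by ring
      _ ≤ 2^k + 2^k := by omega
      _ = 2^(k+1) := by ring

private lemma pow_trivial {K : ℕ} (h3 : K ≠ 3) : K^2 ≤ 2^K := by
  rcases Nat.lt_or_ge K 4 with h | h
  · interval_cases K <;> simp_all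
  · exact sq_le_two_pow h

/-- **Bounded-difference step of Lemma 1 (supplementary material).** If two sample
vectors `v, v' : Fin m → 𝒳` differ in exactly one coordinate, then the plug-in
entropy estimates `Ĥ(v) = H(t ↦ (1/m) ∑ i, q (v i) t)` differ by at most
`card 𝒯 * log m / m`. -/
theorem plugin_entropy_bounded_difference
    {𝒯 𝒳 : Type*} [Fintype 𝒯] (m : ℕ) (hm : 2 ≤ m)
    (q : 𝒳 → 𝒯 → ℝ)
    (hq : ∀ x t, 0 ≤ q x t) (hqsum : ∀ x, ∑ t, q x t = 1)
    (v v' : Fin m → 𝒳) (j : Fin m) (hvv' : ∀ i, i ≠ j → v i = v' i) :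
    |(∑ t, -((1 / (m : ℝ)) * ∑ i, q (v i) t) *
          Real.log ((1 / (m : ℝ)) * ∑ i, q (v i) t)) -
        (∑ t, -((1 / (m : ℝ)) * ∑ i, q (v' i) t) *
          Real.log ((1 / (m : ℝ)) * ∑ i, q (v' i) t))| ≤
      (Fintype.card 𝒯 : ℝ) * Real.log m / m := by
  have hm0 : (0:ℝ) < m := by positivity
  set x : 𝒯 → ℝ := fun t => (1 / (m:ℝ)) * ∑ i, q (v i) t with hxdef
  set y : 𝒯 → ℝ := fun t => (1 / (m:ℝ)) * ∑ i, q (v' i) t with hydef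
  have hrw : ∀ w : 𝒯 → ℝ, (∑ t, -(w t) * Real.log (w t)) = ∑ t, Real.negMulLog (w t) := by
    intro w; apply Finset.sum_congr rfl; intro t _; rw [Real.negMulLog]
  rw [show (∑ t, -((1 / (m : ℝ)) * ∑ i, q (v i) t) *
          Real.log ((1 / (m : ℝ)) * ∑ i, q (v i) t)) = ∑ t, Real.negMulLog (x t) from hrw x,
      show (∑ t, -((1 / (m : ℝ)) * ∑ i, q (v' i) t) *
          Real.log ((1 / (m : ℝ)) * ∑ i, q (v' i) t)) = ∑ t, Real.negMulLog (y t) from hrw y]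
  -- basic pmf facts
  have hq1 : ∀ xx t, q xx t ≤ 1 := by
    intro xx t
    calc q xx t ≤ ∑ t', q xx t' := Finset.single_le_sum (fun t' _ => hq xx t') (Finset.mem_univ t)
      _ = 1 := hqsum xx
  have hsum_aux : ∀ w : Fin m → 𝒳, ∑ t, ((1 / (m:ℝ)) * ∑ i, q (w i) t) = 1 := by
    intro w
    rw [← Finset.mul_sum, Finset.sum_comm]
    have : ∀ i : Fin m, (∑ t, q (w i) t) = 1 := fun i => hqsum (w i)
    rw [Finset.sum_congr rfl (fun i _ => this i), Finset.sum_const, Finset.card_univ,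
      Fintype.card_fin, nsmul_eq_mul, mul_one]
    field_simp
  have hx1 : ∑ t, x t = 1 := hsum_aux v
  have hy1 : ∑ t, y t = 1 := hsum_aux v'
  have hx0 : ∀ t, 0 ≤ x t := fun t => by
    apply mul_nonneg (by positivity)
    exact Finset.sum_nonneg fun i _ => hq _ t
  have hy0 : ∀ t, 0 ≤ y t := fun t => by
    apply mul_nonneg (by positivity)
    exact Finset.sum_nonneg fun i _ => hq _ t
  have hx1' : ∀ t, x t ≤ 1 := by
    intro t
    calc x t ≤ ∑ t', x t' := Finset.single_le_sum (fun t' _ => hx0 t') (Finset.mem_univ t)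
      _ = 1 := hx1
  have hy1' : ∀ t, y t ≤ 1 := by
    intro t
    calc y t ≤ ∑ t', y t' := Finset.single_le_sum (fun t' _ => hy0 t') (Finset.mem_univ t)
      _ = 1 := hy1
  have hdiff : ∀ t, |x t - y t| ≤ 1 / m := by
    intro t
    have hsub : (∑ i, q (v i) t) - (∑ i, q (v' i) t) = q (v j) t - q (v' j) t := by
      rw [← Finset.sum_sub_distrib]
      rw [Finset.sum_eq_single j]
      · intro i _ hij
        rw [hvv' i hij]; ring
      · intro h; exact absurd (Finset.mem_univ j) h
    have e : x t - y t = (1 / (m:ℝ)) * (q (v j) t - q (v' j) t) := by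
      rw [hxdef, hydef]; simp only []; rw [← mul_sub, hsub]
    rw [e, abs_mul, abs_of_pos (show (0:ℝ) < 1/m by positivity)]
    have : |q (v j) t - q (v' j) t| ≤ 1 := by
      rw [abs_le]
      constructor
      · linarith [hq (v j) t, hq1 (v' j) t]
      · linarith [hq1 (v j) t, hq (v' j) t]
    calc (1/(m:ℝ)) * |q (v j) t - q (v' j) t| ≤ (1/(m:ℝ)) * 1 := by
          apply mul_le_mul_of_nonneg_left this (by positivity)
      _ = 1/m := mul_one _
  -- case split on m
  rcases eq_or_lt_of_le hm with hm2 | hm3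
  · -- m = 2
    have hm2' : m = 2 := hm2.symm
    subst hm2'
    have hdiff2 : ∀ t, |x t - y t| ≤ 1/2 := by
      intro t; have := hdiff t; push_cast at this; linarith
    set K := Fintype.card 𝒯 with hKdef
    rcases Nat.eq_zero_or_pos K with hK0 | hKpos
    · exfalso
      have : IsEmpty 𝒯 := Fintype.card_eq_zero_iff.1 hK0
      rw [Finset.univ_eq_empty] at hx1
      simp at hx1
    rcases eq_or_ne K 3 with hK3 | hK3
    · rw [hK3]
      push_cast
      rw [abs_le]
      constructor
      · have := card3_bound hK3 y x hy0 hy1 hx0 hx1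
          (fun t => by rw [abs_sub_comm]; exact hdiff2 t)
        linarith
      · have := card3_bound hK3 x y hx0 hx1 hy0 hy1 hdiff2
        linarith
    · -- trivial bound via log K
      have hKR : (0:ℝ) < K := by exact_mod_cast hKpos
      have hHxle : ∑ t, Real.negMulLog (x t) ≤ Real.log K := by
        have := nml_sum_le Finset.univ x (fun t _ => hx0 t)
        rw [hx1, Finset.card_univ, ← hKdef] at this
        simpa using this
      have hHyle : ∑ t, Real.negMulLog (y t) ≤ Real.log K := by
        have := nml_sum_le Finset.univ y (fun t _ => hy0 t)
        rw [hy1, Finset.card_univ, ← hKdef] at this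
        simpa using this
      have hHx0 : 0 ≤ ∑ t, Real.negMulLog (x t) :=
        Finset.sum_nonneg fun t _ => Real.negMulLog_nonneg (hx0 t) (hx1' t)
      have hHy0 : 0 ≤ ∑ t, Real.negMulLog (y t) :=
        Finset.sum_nonneg fun t _ => Real.negMulLog_nonneg (hy0 t) (hy1' t)
      have habs : |∑ t, Real.negMulLog (x t) - ∑ t, Real.negMulLog (y t)| ≤ Real.log K := by
        rw [abs_le]; constructor <;> linarith
      have hpow : (K:ℝ)^2 ≤ (2:ℝ)^K := by
        have hnat : K^2 ≤ 2^K := pow_trivial hK3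
        calc (K:ℝ)^2 = ((K^2 : ℕ) : ℝ) := by push_cast; ring
          _ ≤ ((2^K : ℕ) : ℝ) := by exact_mod_cast hnat
          _ = (2:ℝ)^K := by push_cast; ring
      have hlogK : Real.log K ≤ (K:ℝ) * Real.log 2 / 2 := by
        have h1 : Real.log ((K:ℝ)^2) ≤ Real.log ((2:ℝ)^K) :=
          Real.log_le_log (by positivity) hpow
        rw [Real.log_pow, Real.log_pow] at h1
        push_cast at h1
        linarith
      push_cast
      calc |∑ t, Real.negMulLog (x t) - ∑ t, Real.negMulLog (y t)| ≤ Real.log K := habs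
        _ ≤ (K:ℝ) * Real.log 2 / 2 := hlogK
  · -- m ≥ 3
    have hm3' : (3:ℕ) ≤ m := hm3
    have hmR3 : (3:ℝ) ≤ m := by exact_mod_cast hm3'
    have hlogm1 : (1:ℝ) ≤ Real.log m := by
      rw [Real.le_log_iff_exp_le hm0]
      have : Real.exp 1 < 3 := lt_of_lt_of_le Real.exp_one_lt_d9 (by norm_num)
      linarith
    have hloginv : Real.log ((1:ℝ)/m) ≤ -1 := by
      rw [one_div, Real.log_inv]; linarith
    have hhalf : (1:ℝ)/m ≤ 1/2 := by
      rw [div_le_div_iff₀ hm0 (by norm_num)]; linarith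
    have hterm : ∀ t, |Real.negMulLog (x t) - Real.negMulLog (y t)| ≤
        Real.negMulLog ((1:ℝ)/m) := by
      intro t
      calc |Real.negMulLog (x t) - Real.negMulLog (y t)|
          ≤ Real.negMulLog |x t - y t| :=
            nml_abs_sub_le (hx0 t) (hx1' t) (hy0 t) (hy1' t) (le_trans (hdiff t) hhalf)
        _ ≤ Real.negMulLog ((1:ℝ)/m) := nml_mono (abs_nonneg _) (hdiff t) hloginv
    have hfm : Real.negMulLog ((1:ℝ)/m) = Real.log m / m := by
      simp only [Real.negMulLog, neg_mul]
      rw [one_div, Real.log_inv]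
      field_simp
    calc |∑ t, Real.negMulLog (x t) - ∑ t, Real.negMulLog (y t)|
        = |∑ t, (Real.negMulLog (x t) - Real.negMulLog (y t))| := by
          rw [Finset.sum_sub_distrib]
      _ ≤ ∑ t, |Real.negMulLog (x t) - Real.negMulLog (y t)| :=
          Finset.abs_sum_le_sum_abs _ _
      _ ≤ ∑ _t : 𝒯, Real.negMulLog ((1:ℝ)/m) := Finset.sum_le_sum fun t _ => hterm t
      _ = (Fintype.card 𝒯 : ℝ) * Real.negMulLog ((1:ℝ)/m) := by
          rw [Finset.sum_const, Finset.card_univ, nsmul_eq_mul]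
      _ = (Fintype.card 𝒯 : ℝ) * Real.log m / m := by rw [hfm]; ring
end

section
/- Let 𝒳 be a measurable space equipped with a probability measure μ, let 𝒯 be a finite type, and let q : 𝒳 → (𝒯 → ℝ) be a fixed channel such that q x is a pmf on 𝒯 for every x ∈ 𝒳 and x ↦ q x t is measurable for each t. Let m be a natural number with m ≥ 2, and for a sample vector v : Fin m → 𝒳 define the plug-in entropy estimate Ĥ(v) = H(t ↦ (1/m) * ∑_{i} q (v i) t). Then for any δ ∈ (0, 1), with probability at least 1 − δ over v drawn from the m-fold product measure μ^{⊗m}, one has |Ĥ(v) − 𝔼_{μ^{⊗m}}[Ĥ]| ≤ (card 𝒯) * Real.log m * Real.sqrt (Real.log (2/δ)) / Real.sqrt (2 * m), where 𝔼_{μ^{⊗m}}[Ĥ] denotes the integral of Ĥ with respect to μ^{⊗m}. -/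
open Real MeasureTheory

lemma integrable_of_bdd {α : Type*} [MeasurableSpace α] {ν : Measure α}
    [IsFiniteMeasure ν] {X : α → ℝ} (hX : Measurable X) {C : ℝ} (hC : ∀ ω, |X ω| ≤ C) :
    Integrable X ν :=
  (integrable_const C).mono' hX.aestronglyMeasurable (ae_of_all _ fun ω => by
    simpa using hC ω)


lemma Dpos {p : ℝ} (hp0 : 0 ≤ p) (hp1 : p ≤ 1) (h : ℝ) : 0 < 1 - p + p * Real.exp h := by
  rcases eq_or_lt_of_le hp0 with rfl | hp
  · simp
  · have : 0 < p * Real.exp h := mul_pos hp (exp_pos h)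
    linarith

lemma hoeffding_kernel {p : ℝ} (hp0 : 0 ≤ p) (hp1 : p ≤ 1) (h : ℝ) :
    Real.log (1 - p + p * Real.exp h) ≤ p * h + h ^ 2 / 8 := by
  set D : ℝ → ℝ := fun h => 1 - p + p * Real.exp h with hD
  have hDpos : ∀ h, 0 < D h := fun h => Dpos hp0 hp1 h
  have hD' : ∀ h, HasDerivAt D (p * Real.exp h) h := fun h =>
    ((Real.hasDerivAt_exp h).const_mul p).const_add (1 - p)
  set ψ : ℝ → ℝ := fun h => p * Real.exp h / D h - (p + h / 4) with hψdef
  set φ : ℝ → ℝ := fun h => Real.log (D h) - (p * h + h ^ 2 / 8) with hφdef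
  have hφ' : ∀ h, HasDerivAt φ (ψ h) h := by
    intro h
    have h1 : HasDerivAt (fun h => Real.log (D h)) (p * Real.exp h / D h) h :=
      (hD' h).log (hDpos h).ne'
    have h2 : HasDerivAt (fun h : ℝ => p * h + h ^ 2 / 8) (p + h * 2 / 8) h := by
      have h3 : HasDerivAt (fun x : ℝ => p * x) p h := by
        simpa using (hasDerivAt_id h).const_mul p
      simpa [mul_comm] using (h3.fun_add ((hasDerivAt_pow 2 h).div_const 8))
    have := h1.fun_sub h2
    refine this.congr_deriv ?_
    simp [hψdef]; ring
  have hψ' : ∀ h, HasDerivAt ψ (p * (1 - p) * Real.exp h / (D h) ^ 2 - 1 / 4) h := by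
    intro h
    have h1 : HasDerivAt (fun h => p * Real.exp h / D h)
        ((p * Real.exp h * D h - p * Real.exp h * (p * Real.exp h)) / (D h) ^ 2) h :=
      ((Real.hasDerivAt_exp h).const_mul p).div (hD' h) (hDpos h).ne'
    have h2 : HasDerivAt (fun h : ℝ => p + h / 4) (1 / 4) h := by
      simpa using ((hasDerivAt_id h).div_const 4).const_add p
    refine (h1.fun_sub h2).congr_deriv ?_
    simp only [hD]
    field_simp
    ring
  have hψnonpos : ∀ h, p * (1 - p) * Real.exp h / (D h) ^ 2 - 1 / 4 ≤ 0 := by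
    intro h
    have hAM : p * (1 - p) * Real.exp h ≤ (D h) ^ 2 / 4 := by
      have key : (1 - p) * (p * Real.exp h) ≤ ((1 - p) + p * Real.exp h) ^ 2 / 4 := by
        nlinarith [sq_nonneg ((1 - p) - p * Real.exp h)]
      calc p * (1 - p) * Real.exp h = (1 - p) * (p * Real.exp h) := by ring
        _ ≤ ((1 - p) + p * Real.exp h) ^ 2 / 4 := key
        _ = (D h) ^ 2 / 4 := by simp only [hD]; try ring_nf
    have := (hDpos h)
    rw [sub_nonpos, div_le_iff₀ (by positivity)]
    linarith
  -- ψ is antitone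
  have hψanti : Antitone ψ := by
    apply antitone_of_deriv_nonpos
    · exact fun h => (hψ' h).differentiableAt
    · intro h; rw [(hψ' h).deriv]; exact hψnonpos h
  have hψ0 : ψ 0 = 0 := by simp [hψdef, hD]
  have hφ0 : φ 0 = 0 := by simp [hφdef, hD]
  have key : φ h ≤ 0 := by
    rcases le_total 0 h with hh | hh
    · have : AntitoneOn φ (Set.Ici 0) := by
        apply antitoneOn_of_deriv_nonpos (convex_Ici 0)
        · exact (continuous_iff_continuousAt.2 fun x => (hφ' x).differentiableAt.continuousAt).continuousOn
        · exact fun x _ => (hφ' x).differentiableAt.differentiableWithinAt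
        · intro x hx
          rw [(hφ' x).deriv]
          rw [← hψ0]
          exact hψanti (le_of_lt (by simpa using hx))
      have := this (Set.self_mem_Ici) (Set.mem_Ici.2 hh) hh
      simpa [hφ0] using this
    · have : MonotoneOn φ (Set.Iic 0) := by
        apply monotoneOn_of_deriv_nonneg (convex_Iic 0)
        · exact (continuous_iff_continuousAt.2 fun x => (hφ' x).differentiableAt.continuousAt).continuousOn
        · exact fun x _ => (hφ' x).differentiableAt.differentiableWithinAt
        · intro x hx
          rw [(hφ' x).deriv]
          rw [← hψ0]
          exact hψanti (le_of_lt (by simpa using hx))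
      have := this (Set.mem_Iic.2 hh) (Set.self_mem_Iic) hh
      simpa [hφ0] using this
  have := key
  simp only [hφdef, sub_nonpos] at this
  exact this



lemma hoeffding_mgf {α : Type*} [MeasurableSpace α] (ν : Measure α)
    [IsProbabilityMeasure ν] {X : α → ℝ} (hX : Measurable X) {a b : ℝ}
    (hab : ∀ ω, X ω ∈ Set.Icc a b) (h0 : ∫ ω, X ω ∂ν = 0) (t : ℝ) :
    ∫ ω, Real.exp (t * X ω) ∂ν ≤ Real.exp (t ^ 2 * (b - a) ^ 2 / 8) := by
  have hne : Nonempty α := MeasureTheory.Measure.nonempty_of_neZero ν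
  have hXint : Integrable X ν := integrable_of_bdd hX (C := max |a| |b|)
    (fun ω => abs_le_max_abs_abs (hab ω).1 (hab ω).2)
  have hab' : a ≤ b := le_trans (hab (Classical.arbitrary α)).1 (hab (Classical.arbitrary α)).2
  have ha : a ≤ 0 := by
    have : ∫ _ω, a ∂ν ≤ ∫ ω, X ω ∂ν :=
      integral_mono (integrable_const a) hXint fun ω => (hab ω).1
    simpa [h0] using this
  have hb : 0 ≤ b := by
    have : ∫ ω, X ω ∂ν ≤ ∫ _ω, b ∂ν :=
      integral_mono hXint (integrable_const b) fun ω => (hab ω).2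
    simpa [h0] using this
  rcases eq_or_lt_of_le hab' with rfl | hlt
  · -- a = b, so X ≡ 0
    have hX0 : ∀ ω, X ω = 0 := fun ω => le_antisymm (le_trans (hab ω).2 ha)
      (le_trans hb (hab ω).1)
    simp only [hX0, mul_zero, Real.exp_zero, integral_const, measure_univ,
      ENNReal.toReal_one, probReal_univ, smul_eq_mul, one_mul]
    exact Real.one_le_exp (by positivity)
  · have hba : 0 < b - a := sub_pos.2 hlt
    -- pointwise convexity bound
    have hpt : ∀ ω, Real.exp (t * X ω) ≤
        ((b - X ω) * Real.exp (t * a) + (X ω - a) * Real.exp (t * b)) / (b - a) := by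
      intro ω
      obtain ⟨h1, h2⟩ := hab ω
      have hθ1 : 0 ≤ (b - X ω) / (b - a) := div_nonneg (by linarith) hba.le
      have hθ2 : 0 ≤ (X ω - a) / (b - a) := div_nonneg (by linarith) hba.le
      have hθs : (b - X ω) / (b - a) + (X ω - a) / (b - a) = 1 := by
        field_simp; ring
      have := convexOn_exp.2 (Set.mem_univ (t * a)) (Set.mem_univ (t * b)) hθ1 hθ2 hθs
      have harg : (b - X ω) / (b - a) * (t * a) + (X ω - a) / (b - a) * (t * b) = t * X ω := by
        field_simp; ring
      simp only [smul_eq_mul] at this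
      rw [harg] at this
      calc Real.exp (t * X ω) ≤ (b - X ω) / (b - a) * Real.exp (t * a)
            + (X ω - a) / (b - a) * Real.exp (t * b) := by simpa using this
        _ = ((b - X ω) * Real.exp (t * a) + (X ω - a) * Real.exp (t * b)) / (b - a) := by
            ring
    -- integrate
    have hintL : Integrable (fun ω => Real.exp (t * X ω)) ν := by
      apply integrable_of_bdd (hX.const_mul t).exp (C := Real.exp (|t| * max |a| |b|))
      intro ω
      rw [abs_of_pos (Real.exp_pos _)]
      apply Real.exp_le_exp.2
      calc t * X ω ≤ |t * X ω| := le_abs_self _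
        _ = |t| * |X ω| := abs_mul _ _
        _ ≤ |t| * max |a| |b| := by
            exact mul_le_mul_of_nonneg_left (abs_le_max_abs_abs (hab ω).1 (hab ω).2)
              (abs_nonneg t)
    have hintR : Integrable
        (fun ω => ((b - X ω) * Real.exp (t * a) + (X ω - a) * Real.exp (t * b)) / (b - a)) ν := by
      apply Integrable.div_const
      exact (((integrable_const b).sub hXint).mul_const _).add
        ((hXint.sub (integrable_const a)).mul_const _)
    have hInt : ∫ ω, Real.exp (t * X ω) ∂ν ≤
        (b * Real.exp (t * a) - a * Real.exp (t * b)) / (b - a) := by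
      calc ∫ ω, Real.exp (t * X ω) ∂ν
          ≤ ∫ ω, ((b - X ω) * Real.exp (t * a) + (X ω - a) * Real.exp (t * b)) / (b - a) ∂ν :=
            integral_mono hintL hintR hpt
        _ = (b * Real.exp (t * a) - a * Real.exp (t * b)) / (b - a) := by
            rw [integral_div]
            congr 1
            have i1 : Integrable (fun ω => (b - X ω) * Real.exp (t * a)) ν :=
              (((integrable_const b).sub hXint).mul_const _ : _)
            have i2 : Integrable (fun ω => (X ω - a) * Real.exp (t * b)) ν :=
              ((hXint.sub (integrable_const a)).mul_const _ : _)
            have i3 : Integrable (fun ω => b - X ω) ν := (integrable_const b).sub hXint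
            have i4 : Integrable (fun ω => X ω - a) ν := hXint.sub (integrable_const a)
            rw [integral_add i1 i2, integral_mul_const, integral_mul_const,
              integral_sub (integrable_const b) hXint,
              integral_sub hXint (integrable_const a), h0]
            simp [integral_const]
            ring
    refine le_trans hInt ?_
    -- kernel step
    set p : ℝ := -a / (b - a) with hp
    have hp0 : 0 ≤ p := div_nonneg (by linarith) hba.le
    have hp1 : p ≤ 1 := by
      rw [hp, div_le_one hba]; linarith
    set h : ℝ := t * (b - a) with hh
    have hiden : (b * Real.exp (t * a) - a * Real.exp (t * b)) / (b - a)
        = Real.exp (t * a) * (1 - p + p * Real.exp h) := by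
      rw [hp, hh]
      have : t * b = t * a + t * (b - a) := by ring
      rw [this, Real.exp_add]
      field_simp
      ring
    rw [hiden]
    have hker : 1 - p + p * Real.exp h ≤ Real.exp (p * h + h ^ 2 / 8) := by
      have hpos : 0 < 1 - p + p * Real.exp h := by
        rcases eq_or_lt_of_le hp0 with hq | hq
        · simp [← hq]
        · have : 0 < p * Real.exp h := mul_pos hq (Real.exp_pos h)
          linarith
      rw [← Real.exp_log hpos]
      exact Real.exp_le_exp.2 (hoeffding_kernel hp0 hp1 h)
    calc Real.exp (t * a) * (1 - p + p * Real.exp h)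
        ≤ Real.exp (t * a) * Real.exp (p * h + h ^ 2 / 8) :=
          mul_le_mul_of_nonneg_left hker (Real.exp_pos _).le
      _ = Real.exp (t * a + (p * h + h ^ 2 / 8)) := (Real.exp_add _ _).symm
      _ = Real.exp (t ^ 2 * (b - a) ^ 2 / 8) := by
          congr 1
          rw [hp, hh]
          field_simp
          ring



theorem mcdiarmid_mgf {𝒳 : Type*} [MeasurableSpace 𝒳] (μ : Measure 𝒳)
    [IsProbabilityMeasure μ] :
    ∀ (n : ℕ) (f : (Fin n → 𝒳) → ℝ), Measurable f →
      ∀ (M : ℝ), (∀ v, |f v| ≤ M) →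
      ∀ (c : ℝ), 0 ≤ c →
      (∀ (v : Fin n → 𝒳) (i : Fin n) (x : 𝒳), |f (Function.update v i x) - f v| ≤ c) →
      ∀ (t : ℝ),
      ∫ v, Real.exp (t * (f v - ∫ w, f w ∂(Measure.pi fun _ : Fin n => μ)))
          ∂(Measure.pi fun _ : Fin n => μ)
        ≤ Real.exp (t ^ 2 * n * c ^ 2 / 8) := by
  intro n
  induction n with
  | zero =>
    intro f hf M hM c hc hbd t
    have hconst : ∀ v : Fin 0 → 𝒳, f v = f default := fun v => by
      congr 1; exact Subsingleton.elim _ _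
    have : ∫ w, f w ∂(Measure.pi fun _ : Fin 0 => μ) = f default := by
      rw [show f = fun _ => f default from funext hconst]
      simp [integral_const]
    rw [this]
    have : (fun v : Fin 0 → 𝒳 => Real.exp (t * (f v - f default))) = fun _ => 1 := by
      funext v; rw [hconst v]; simp
    rw [this]
    simp only [integral_const, measure_univ, ENNReal.toReal_one, probReal_univ, smul_eq_mul, one_mul,
      Nat.cast_zero]
    exact Real.one_le_exp (by positivity)
  | succ n IH =>
    intro f hf M hM c hc hbd t
    classical
    set πn : Measure (Fin n → 𝒳) := Measure.pi fun _ => μ with hπn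
    set πs : Measure (Fin (n + 1) → 𝒳) := Measure.pi fun _ => μ with hπs
    set e := MeasurableEquiv.piFinSuccAbove (fun _ : Fin (n + 1) => 𝒳) 0 with he
    have mp : MeasurePreserving e πs (μ.prod πn) :=
      measurePreserving_piFinSuccAbove (fun _ : Fin (n + 1) => μ) 0
    set g : 𝒳 × (Fin n → 𝒳) → ℝ := fun y => f (e.symm y) with hg
    have hgm : Measurable g := hf.comp e.symm.measurable
    have hgM : ∀ y, |g y| ≤ M := fun y => hM _
    -- e.symm structure
    have hsymm : ∀ (x : 𝒳) (w : Fin n → 𝒳), e.symm (x, w) = Fin.cons x w := by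
      intro x w
      rw [he]
      simp only [MeasurableEquiv.piFinSuccAbove_symm_apply, Fin.insertNthEquiv_zero]
      rfl
    -- the conditional mean over the first coordinate
    set F : (Fin n → 𝒳) → ℝ := fun w => ∫ x, g (x, w) ∂μ with hF
    have hFm : Measurable F :=
      (hgm.stronglyMeasurable.integral_prod_left' (μ := μ)).measurable
    have hgxm : ∀ w : Fin n → 𝒳, Measurable fun x => g (x, w) :=
      fun w => hgm.comp (measurable_id.prodMk measurable_const)
    have hgxint : ∀ w, Integrable (fun x => g (x, w)) μ :=
      fun w => integrable_of_bdd (hgxm w) (fun x => hgM _)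
    have hFM : ∀ w, |F w| ≤ M := by
      intro w
      calc |F w| ≤ ∫ x, |g (x, w)| ∂μ := by
            simpa using norm_integral_le_integral_norm (fun x => g (x, w))
        _ ≤ ∫ _x, M ∂μ := integral_mono ((hgxint w).abs) (integrable_const M)
            (fun x => hgM _)
        _ = M := by simp [integral_const]
    -- changing coordinate 0 changes g by at most c
    have hg0 : ∀ (x x' : 𝒳) (w : Fin n → 𝒳), |g (x', w) - g (x, w)| ≤ c := by
      intro x x' w
      rw [hg]
      simp only
      rw [hsymm, hsymm]
      have : (Fin.cons x' w : Fin (n+1) → 𝒳) = Function.update (Fin.cons x w) 0 x' := by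
        funext i
        refine Fin.cases ?_ (fun j => ?_) i
        · simp
        · rw [Function.update_of_ne (Fin.succ_ne_zero j)]
          simp
      rw [this]
      exact hbd _ _ _
    -- changing a later coordinate changes g by at most c
    have hgsucc : ∀ (x : 𝒳) (w : Fin n → 𝒳) (i : Fin n) (x' : 𝒳),
        |g (x, Function.update w i x') - g (x, w)| ≤ c := by
      intro x w i x'
      rw [hg]; simp only
      rw [hsymm, hsymm]
      have : (Fin.cons x (Function.update w i x') : Fin (n+1) → 𝒳)
          = Function.update (Fin.cons x w) i.succ x' := by
        funext j
        refine Fin.cases ?_ (fun k => ?_) j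
        · rw [Function.update_of_ne (Fin.succ_ne_zero i).symm]
          simp
        · by_cases hk : k = i
          · subst hk; simp
          · rw [Function.update_of_ne (fun hh => hk (Fin.succ_injective _ hh))]
            simp [Function.update_of_ne hk]
      rw [this]
      exact hbd _ _ _
    -- F has bounded differences
    have hFbd : ∀ (w : Fin n → 𝒳) (i : Fin n) (x' : 𝒳),
        |F (Function.update w i x') - F w| ≤ c := by
      intro w i x'
      have : F (Function.update w i x') - F w
          = ∫ x, (g (x, Function.update w i x') - g (x, w)) ∂μ := by
        rw [hF]; exact (integral_sub (hgxint _) (hgxint _)).symm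
      rw [this]
      calc |∫ x, (g (x, Function.update w i x') - g (x, w)) ∂μ|
          ≤ ∫ x, |g (x, Function.update w i x') - g (x, w)| ∂μ := by
            simpa using norm_integral_le_integral_norm
              (fun x => g (x, Function.update w i x') - g (x, w))
        _ ≤ ∫ _x, c ∂μ := integral_mono ((hgxint _).sub (hgxint _)).abs
            (integrable_const c) (fun x => hgsucc _ _ _ _)
        _ = c := by simp [integral_const]
    -- integral transfer
    have hgint : Integrable g (μ.prod πn) := integrable_of_bdd hgm hgM
    have hIeq : ∫ w, f w ∂πs = ∫ y, g y ∂(μ.prod πn) := by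
      rw [← mp.map_eq, MeasureTheory.integral_map_equiv]
      congr 1; funext v; rw [hg]; simp
    obtain ⟨I, hI⟩ : ∃ I : ℝ, ∫ w, f w ∂πs = I := ⟨_, rfl⟩
    have hFint : ∫ w, F w ∂πn = I := by
      rw [← hI, hIeq, ← integral_prod_symm g hgint]
    -- main chain
    have hEexp : ∀ y, |Real.exp (t * (g y - I))| ≤ Real.exp (|t| * (M + |I|)) := by
      intro y
      rw [abs_of_pos (Real.exp_pos _)]
      apply Real.exp_le_exp.2
      calc t * (g y - I) ≤ |t * (g y - I)| := le_abs_self _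
        _ = |t| * |g y - I| := abs_mul _ _
        _ ≤ |t| * (M + |I|) := mul_le_mul_of_nonneg_left
            (le_trans (abs_sub _ _) (add_le_add (hgM y) le_rfl)) (abs_nonneg t)
    have hexpint : Integrable (fun y => Real.exp (t * (g y - I))) (μ.prod πn) :=
      integrable_of_bdd ((hgm.sub measurable_const).const_mul t).exp hEexp
    have step1 : ∫ v, Real.exp (t * (f v - I)) ∂πs
        = ∫ y, Real.exp (t * (g y - I)) ∂(μ.prod πn) := by
      rw [← mp.map_eq, MeasureTheory.integral_map_equiv]
      congr 1; funext v; rw [hg]; simp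
    have step2 : ∫ y, Real.exp (t * (g y - I)) ∂(μ.prod πn)
        = ∫ w, (∫ x, Real.exp (t * (g (x, w) - I)) ∂μ) ∂πn :=
      integral_prod_symm _ hexpint
    -- inner Hoeffding bound
    have inner : ∀ w, ∫ x, Real.exp (t * (g (x, w) - I)) ∂μ
        ≤ Real.exp (t ^ 2 * c ^ 2 / 8) * Real.exp (t * (F w - I)) := by
      intro w
      set S := sSup (Set.range fun x => g (x, w)) with hS
      have hbddA : BddAbove (Set.range fun x => g (x, w)) :=
        ⟨M, by rintro _ ⟨x, rfl⟩; exact le_trans (le_abs_self _) (hgM _)⟩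
      have hneX : Nonempty 𝒳 := MeasureTheory.Measure.nonempty_of_neZero μ
      have hSmem : ∀ x, g (x, w) ≤ S := fun x => le_csSup hbddA ⟨x, rfl⟩
      have hSlow : ∀ x, S - c ≤ g (x, w) := by
        intro x
        have : ∀ x', g (x', w) ≤ g (x, w) + c := by
          intro x'
          have := hg0 x x' w
          have := abs_le.1 this
          linarith [this.1, this.2]
        have : S ≤ g (x, w) + c := csSup_le (Set.range_nonempty _) (by
          rintro _ ⟨x', rfl⟩; exact this x')
        linarith
      -- apply Hoeffding to X := g(·,w) - F w
      have hmean : ∫ x, (g (x, w) - F w) ∂μ = 0 := by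
        rw [integral_sub (hgxint w) (integrable_const _)]
        simp [hF, integral_const]
      have hrange : ∀ x, g (x, w) - F w ∈ Set.Icc (S - c - F w) (S - F w) :=
        fun x => ⟨by linarith [hSlow x], by linarith [hSmem x]⟩
      have hhoef := hoeffding_mgf μ ((hgxm w).sub measurable_const) hrange hmean t
      have hsq : (S - F w - (S - c - F w)) ^ 2 = c ^ 2 := by ring_nf
      rw [hsq] at hhoef
      calc ∫ x, Real.exp (t * (g (x, w) - I)) ∂μ
          = ∫ x, Real.exp (t * (F w - I)) * Real.exp (t * (g (x, w) - F w)) ∂μ := by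
            congr 1; funext x
            rw [← Real.exp_add]; congr 1; ring
        _ = Real.exp (t * (F w - I)) * ∫ x, Real.exp (t * (g (x, w) - F w)) ∂μ :=
            integral_const_mul _ _
        _ ≤ Real.exp (t * (F w - I)) * Real.exp (t ^ 2 * c ^ 2 / 8) :=
            mul_le_mul_of_nonneg_left hhoef (Real.exp_pos _).le
        _ = Real.exp (t ^ 2 * c ^ 2 / 8) * Real.exp (t * (F w - I)) := mul_comm _ _
    -- outer bound via IH
    have hFexpint : Integrable (fun w => Real.exp (t * (F w - I))) πn := by
      apply integrable_of_bdd ((hFm.sub measurable_const).const_mul t).exp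
        (C := Real.exp (|t| * (M + |I|)))
      intro w
      rw [abs_of_pos (Real.exp_pos _)]
      apply Real.exp_le_exp.2
      calc t * (F w - I) ≤ |t * (F w - I)| := le_abs_self _
        _ = |t| * |F w - I| := abs_mul _ _
        _ ≤ |t| * (M + |I|) := mul_le_mul_of_nonneg_left
            (le_trans (abs_sub _ _) (add_le_add (hFM w) le_rfl)) (abs_nonneg t)
    have hinnerint : Integrable
        (fun w => ∫ x, Real.exp (t * (g (x, w) - I)) ∂μ) πn := by
      apply integrable_of_bdd
        (((((hgm.sub measurable_const).const_mul t).exp).stronglyMeasurable.integral_prod_left'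
          (μ := μ)).measurable) (C := Real.exp (|t| * (M + |I|)))
      intro w
      have hint : Integrable (fun x => Real.exp (t * (g (x, w) - I))) μ :=
        integrable_of_bdd (((hgxm w).sub measurable_const).const_mul t).exp
          (fun x => hEexp _)
      calc |∫ x, Real.exp (t * (g (x, w) - I)) ∂μ|
          ≤ ∫ x, |Real.exp (t * (g (x, w) - I))| ∂μ := by
            simpa using norm_integral_le_integral_norm
              (fun x => Real.exp (t * (g (x, w) - I)))
        _ ≤ ∫ _x, Real.exp (|t| * (M + |I|)) ∂μ :=
            integral_mono hint.abs (integrable_const _) (fun x => hEexp _)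
        _ = _ := by simp [integral_const]
    -- put everything together
    have hIH := IH F hFm M hFM c hc hFbd t
    rw [hFint] at hIH
    have main : ∫ v, Real.exp (t * (f v - I)) ∂πs
        ≤ Real.exp (t ^ 2 * c ^ 2 / 8) * Real.exp (t ^ 2 * n * c ^ 2 / 8) := by
      calc ∫ v, Real.exp (t * (f v - I)) ∂πs
          = ∫ w, (∫ x, Real.exp (t * (g (x, w) - I)) ∂μ) ∂πn := by rw [step1, step2]
        _ ≤ ∫ w, Real.exp (t ^ 2 * c ^ 2 / 8) * Real.exp (t * (F w - I)) ∂πn :=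
            integral_mono hinnerint (hFexpint.const_mul _) inner
        _ = Real.exp (t ^ 2 * c ^ 2 / 8) * ∫ w, Real.exp (t * (F w - I)) ∂πn :=
            integral_const_mul _ _
        _ ≤ Real.exp (t ^ 2 * c ^ 2 / 8) * Real.exp (t ^ 2 * n * c ^ 2 / 8) :=
            mul_le_mul_of_nonneg_left hIH (Real.exp_pos _).le
    rw [hI]
    refine le_trans main ?_
    rw [← Real.exp_add]
    apply Real.exp_le_exp.2
    push_cast
    ring_nf
    exact le_rfl


lemma mcdiarmid_one_side {𝒳 : Type*} [MeasurableSpace 𝒳] (μ : Measure 𝒳)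
    [IsProbabilityMeasure μ] (n : ℕ) (hn : 0 < n) (f : (Fin n → 𝒳) → ℝ)
    (hf : Measurable f) (M : ℝ) (hM : ∀ v, |f v| ≤ M) (c : ℝ) (hc : 0 < c)
    (hbd : ∀ (v : Fin n → 𝒳) (i : Fin n) (x : 𝒳), |f (Function.update v i x) - f v| ≤ c)
    (ε : ℝ) (hε : 0 < ε) :
    ((Measure.pi fun _ : Fin n => μ)
        {v | ε ≤ f v - ∫ w, f w ∂(Measure.pi fun _ : Fin n => μ)}).toReal
      ≤ Real.exp (-2 * ε ^ 2 / (n * c ^ 2)) := by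
  set pp : Measure (Fin n → 𝒳) := Measure.pi fun _ => μ with hpp
  obtain ⟨I, hI⟩ : ∃ I : ℝ, ∫ w, f w ∂pp = I := ⟨_, rfl⟩
  rw [hI]
  have hnpos : (0 : ℝ) < n := by exact_mod_cast hn
  set t : ℝ := 4 * ε / (n * c ^ 2) with ht
  have htpos : 0 < t := by positivity
  have hmgf := mcdiarmid_mgf μ n f hf M hM c hc.le hbd t
  rw [hI] at hmgf
  have hXint : Integrable (fun v => Real.exp (t * (f v - I))) pp := by
    apply integrable_of_bdd (((hf.sub measurable_const).const_mul t).exp)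
      (C := Real.exp (|t| * (M + |I|)))
    intro v
    rw [abs_of_pos (Real.exp_pos _)]
    apply Real.exp_le_exp.2
    calc t * (f v - I) ≤ |t * (f v - I)| := le_abs_self _
      _ = |t| * |f v - I| := abs_mul _ _
      _ ≤ |t| * (M + |I|) := mul_le_mul_of_nonneg_left
          (le_trans (abs_sub _ _) (add_le_add (hM v) le_rfl)) (abs_nonneg t)
  have markov := mul_meas_ge_le_integral_of_nonneg
    (ae_of_all pp fun v => (Real.exp_pos (t * (f v - I))).le) hXint (Real.exp (t * ε))
  have hsub : {v | ε ≤ f v - I} ⊆ {v | Real.exp (t * ε) ≤ Real.exp (t * (f v - I))} := by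
    intro v hv
    exact Real.exp_le_exp.2 (mul_le_mul_of_nonneg_left hv htpos.le)
  have hmono : (pp {v | ε ≤ f v - I}).toReal
      ≤ (pp {v | Real.exp (t * ε) ≤ Real.exp (t * (f v - I))}).toReal := by
    apply ENNReal.toReal_mono (measure_ne_top pp _)
    exact measure_mono hsub
  have key : Real.exp (t * ε) * (pp {v | ε ≤ f v - I}).toReal
      ≤ Real.exp (t ^ 2 * n * c ^ 2 / 8) := by
    refine le_trans ?_ (le_trans markov hmgf)
    exact mul_le_mul_of_nonneg_left hmono (Real.exp_pos _).le
  have final : (pp {v | ε ≤ f v - I}).toReal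
      ≤ Real.exp (t ^ 2 * n * c ^ 2 / 8) / Real.exp (t * ε) := by
    rw [le_div_iff₀ (Real.exp_pos _)]
    calc (pp {v | ε ≤ f v - I}).toReal * Real.exp (t * ε)
        = Real.exp (t * ε) * (pp {v | ε ≤ f v - I}).toReal := mul_comm _ _
      _ ≤ _ := key
  refine le_trans final ?_
  rw [← Real.exp_sub]
  apply Real.exp_le_exp.2
  have h1 : t ^ 2 * n * c ^ 2 / 8 - t * ε = -2 * ε ^ 2 / (n * c ^ 2) := by
    rw [ht]
    field_simp
    ring
  rw [h1]


-- L1: subadditivity of negMulLog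
lemma negMulLog_add_le {a b : ℝ} (ha : 0 ≤ a) (hb : 0 ≤ b) :
    negMulLog (a + b) ≤ negMulLog a + negMulLog b := by
  rcases eq_or_lt_of_le ha with rfl | ha'
  · simp
  rcases eq_or_lt_of_le hb with rfl | hb'
  · simp
  simp only [negMulLog, neg_mul]
  have h1 : a * Real.log a ≤ a * Real.log (a + b) :=
    mul_le_mul_of_nonneg_left (Real.log_le_log ha' (by linarith)) ha
  have h2 : b * Real.log b ≤ b * Real.log (a + b) :=
    mul_le_mul_of_nonneg_left (Real.log_le_log hb' (by linarith)) hb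
  nlinarith [add_mul a b (Real.log (a + b))]

-- L1': difference form
lemma negMulLog_sub_le {a b : ℝ} (ha : 0 ≤ a) (hab : a ≤ b) :
    negMulLog b - negMulLog a ≤ negMulLog (b - a) := by
  have := negMulLog_add_le ha (sub_nonneg.2 hab)
  have h : a + (b - a) = b := by ring
  rw [h] at this
  linarith

-- L2: reverse Lipschitz bound
lemma negMulLog_rev_le {a b : ℝ} (ha : 0 ≤ a) (hab : a ≤ b) (hb : b ≤ 1) :
    negMulLog a - negMulLog b ≤ b - a := by
  have hmono : MonotoneOn (fun x : ℝ => x + negMulLog x) (Set.Icc 0 1) := by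
    apply monotoneOn_of_deriv_nonneg (convex_Icc 0 1)
    · exact (continuous_id.add continuous_negMulLog).continuousOn
    · intro x hx
      rw [interior_Icc] at hx
      exact (hasDerivAt_id' x |>.fun_add (hasDerivAt_negMulLog (ne_of_gt hx.1))).differentiableAt.differentiableWithinAt
    · intro x hx
      rw [interior_Icc] at hx
      rw [(hasDerivAt_id' x |>.fun_add (hasDerivAt_negMulLog (ne_of_gt hx.1))).deriv]
      have : Real.log x ≤ 0 := Real.log_nonpos hx.1.le hx.2.le
      linarith
  have := hmono (Set.mem_Icc.2 ⟨ha, le_trans hab hb⟩) (Set.mem_Icc.2 ⟨le_trans ha hab, hb⟩) hab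
  simp only at this
  linarith

-- L3
lemma negMulLog_shift_le {T b : ℝ} (hT : 0 ≤ T) (hTb : T ≤ b) (hb : b ≤ 1) :
    negMulLog (b - T) - negMulLog b ≤ negMulLog (1 - T) := by
  have hmono : MonotoneOn (fun x : ℝ => negMulLog (x - T) - negMulLog x) (Set.Icc T 1) := by
    apply monotoneOn_of_deriv_nonneg (convex_Icc T 1)
    · exact ((continuous_negMulLog.comp (continuous_id.sub continuous_const)).sub
        continuous_negMulLog).continuousOn
    · intro x hx
      rw [interior_Icc] at hx
      have hx0 : 0 < x := lt_of_le_of_lt hT hx.1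
      have hxT : 0 < x - T := sub_pos.2 hx.1
      have h3 : HasDerivAt (fun y : ℝ => negMulLog (y - T)) (-Real.log (x - T) - 1) x := by
        simpa [Function.comp_def] using (hasDerivAt_negMulLog hxT.ne').comp x ((hasDerivAt_id x).sub_const T)
      exact (h3.fun_sub (hasDerivAt_negMulLog hx0.ne')).differentiableAt.differentiableWithinAt
    · intro x hx
      rw [interior_Icc] at hx
      have hx0 : 0 < x := lt_of_le_of_lt hT hx.1
      have hxT : 0 < x - T := sub_pos.2 hx.1
      have h3 : HasDerivAt (fun y : ℝ => negMulLog (y - T)) (-Real.log (x - T) - 1) x := by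
        simpa [Function.comp_def] using (hasDerivAt_negMulLog hxT.ne').comp x ((hasDerivAt_id x).sub_const T)
      rw [(h3.fun_sub (hasDerivAt_negMulLog hx0.ne')).deriv]
      have : Real.log (x - T) ≤ Real.log x := Real.log_le_log hxT (by linarith)
      linarith
  have h1 : b ∈ Set.Icc T 1 := Set.mem_Icc.2 ⟨hTb, hb⟩
  have h2 : (1 : ℝ) ∈ Set.Icc T 1 := Set.mem_Icc.2 ⟨le_trans hTb hb, le_rfl⟩
  have := hmono h1 h2 hb
  simp only [negMulLog_one, sub_zero] at this
  linarith

-- Jensen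
lemma sum_negMulLog_le {𝒯 : Type*} (s : Finset 𝒯) (hs : s.Nonempty) (h : 𝒯 → ℝ)
    (h0 : ∀ t ∈ s, 0 ≤ h t) :
    ∑ t ∈ s, negMulLog (h t) ≤ s.card * negMulLog ((∑ t ∈ s, h t) / s.card) := by
  have hk : 0 < (s.card : ℝ) := by exact_mod_cast Finset.card_pos.2 hs
  have := concaveOn_negMulLog.le_map_sum (t := s) (w := fun _ => 1 / (s.card : ℝ))
    (p := h) (fun t _ => by positivity)
    (by rw [Finset.sum_const, nsmul_eq_mul]; field_simp)
    (fun t ht => Set.mem_Ici.2 (h0 t ht))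
  simp only [smul_eq_mul] at this
  have h1 : ∑ t ∈ s, 1 / (s.card : ℝ) * negMulLog (h t)
      = (1 / (s.card : ℝ)) * ∑ t ∈ s, negMulLog (h t) := by
    rw [Finset.mul_sum]
  have h2 : ∑ t ∈ s, 1 / (s.card : ℝ) * h t = (∑ t ∈ s, h t) / s.card := by
    rw [← Finset.mul_sum]; ring
  rw [h1, h2] at this
  calc ∑ t ∈ s, negMulLog (h t)
      = (s.card : ℝ) * ((1 / (s.card : ℝ)) * ∑ t ∈ s, negMulLog (h t)) := by
        field_simp
    _ ≤ (s.card : ℝ) * negMulLog ((∑ t ∈ s, h t) / s.card) :=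
        mul_le_mul_of_nonneg_left this hk.le

lemma one_le_log_three {m : ℝ} (hm : 3 ≤ m) : 1 ≤ Real.log m := by
  rw [Real.le_log_iff_exp_le (by linarith)]
  have := Real.exp_one_lt_d9
  linarith

lemma L5a {m : ℕ} (hm : 2 ≤ m) :
    ((m : ℝ) - 1) * Real.log ((m : ℝ) / ((m : ℝ) - 1)) ≤ Real.log m := by
  have hm1 : (1 : ℝ) ≤ (m : ℝ) - 1 := by
    have : (2 : ℝ) ≤ (m : ℝ) := by exact_mod_cast hm
    linarith
  rcases eq_or_lt_of_le hm with h2 | h3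
  · have : (m : ℝ) = 2 := by exact_mod_cast h2.symm
    rw [this]; norm_num
  · have hm3 : (3 : ℝ) ≤ (m : ℝ) := by exact_mod_cast h3
    have hpos : 0 < (m : ℝ) / ((m : ℝ) - 1) := by positivity
    have h1 : Real.log ((m : ℝ) / ((m : ℝ) - 1)) ≤ (m : ℝ) / ((m : ℝ) - 1) - 1 :=
      Real.log_le_sub_one_of_pos hpos
    have h2 : ((m : ℝ) - 1) * ((m : ℝ) / ((m : ℝ) - 1) - 1) = 1 := by
      field_simp; ring
    calc ((m : ℝ) - 1) * Real.log ((m : ℝ) / ((m : ℝ) - 1))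
        ≤ ((m : ℝ) - 1) * ((m : ℝ) / ((m : ℝ) - 1) - 1) :=
          mul_le_mul_of_nonneg_left h1 (by linarith)
      _ = 1 := h2
      _ ≤ Real.log m := one_le_log_three hm3

lemma cast_le_two_pow {k : ℕ} : (k + 1 : ℝ) ≤ 2 ^ k := by
  have := Nat.lt_two_pow_self (n := k)
  have : (k + 1 : ℕ) ≤ 2 ^ k := this
  exact_mod_cast this

lemma L5b {d : ℕ} (hd : 2 ≤ d) : Real.log ((d : ℝ) - 1) ≤ ((d : ℝ) - 2) * Real.log 2 := by
  have h1 : ((d : ℝ) - 1) ≤ 2 ^ (d - 2) := by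
    have : ((d - 2 : ℕ) + 1 : ℝ) ≤ 2 ^ (d - 2) := cast_le_two_pow
    have hc : ((d - 2 : ℕ) : ℝ) = (d : ℝ) - 2 := by
      have : (2 : ℕ) ≤ d := hd; push_cast [Nat.cast_sub this]; ring
    linarith [hc ▸ this]
  have h2 : Real.log ((d : ℝ) - 1) ≤ Real.log (2 ^ (d - 2)) := by
    apply Real.log_le_log (by
      have : (2 : ℝ) ≤ (d : ℝ) := by exact_mod_cast hd
      linarith) h1
  calc Real.log ((d : ℝ) - 1) ≤ Real.log (2 ^ (d - 2)) := h2
    _ = ((d - 2 : ℕ) : ℝ) * Real.log 2 := by rw [Real.log_pow]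
    _ = ((d : ℝ) - 2) * Real.log 2 := by
        have : (2 : ℕ) ≤ d := hd
        push_cast [Nat.cast_sub this]; ring

lemma one_le_two_log_two : (1 : ℝ) ≤ 2 * Real.log 2 := by
  have : (2 : ℝ) * Real.log 2 = Real.log 4 := by
    rw [show (4 : ℝ) = 2 ^ (2 : ℕ) by norm_num, Real.log_pow]; push_cast; ring
  rw [this, Real.le_log_iff_exp_le (by norm_num)]
  have := Real.exp_one_lt_d9
  nlinarith

lemma L5c {d : ℕ} (hd : 3 ≤ d) : Real.log ((d : ℝ) - 2) + 1 ≤ ((d : ℝ) - 1) * Real.log 2 := by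
  have h1 : ((d : ℝ) - 2) ≤ 2 ^ (d - 3) := by
    have : ((d - 3 : ℕ) + 1 : ℝ) ≤ 2 ^ (d - 3) := cast_le_two_pow
    have hc : ((d - 3 : ℕ) : ℝ) = (d : ℝ) - 3 := by
      have : (3 : ℕ) ≤ d := hd; push_cast [Nat.cast_sub this]; ring
    linarith [hc ▸ this]
  have h2 : Real.log ((d : ℝ) - 2) ≤ ((d : ℝ) - 3) * Real.log 2 := by
    calc Real.log ((d : ℝ) - 2) ≤ Real.log (2 ^ (d - 3)) := by
          apply Real.log_le_log (by
            have : (3 : ℝ) ≤ (d : ℝ) := by exact_mod_cast hd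
            linarith) h1
      _ = ((d - 3 : ℕ) : ℝ) * Real.log 2 := by rw [Real.log_pow]
      _ = ((d : ℝ) - 3) * Real.log 2 := by
          have : (3 : ℕ) ≤ d := hd
          push_cast [Nat.cast_sub this]; ring
  have := one_le_two_log_two
  nlinarith [Real.log_pos (by norm_num : (1:ℝ) < 2)]

-- monotone helper functions
lemma g1_mono {C : ℝ} (hC : 0 ≤ C) :
    MonotoneOn (fun T : ℝ => T * C + negMulLog T + negMulLog (1 - T)) (Set.Icc 0 (1/2)) := by
  apply monotoneOn_of_deriv_nonneg (convex_Icc 0 (1/2))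
  · exact ((continuous_id.mul continuous_const).add continuous_negMulLog |>.add
      (continuous_negMulLog.comp (continuous_const.sub continuous_id))).continuousOn
  · intro x hx
    rw [interior_Icc] at hx
    have hx0 : (0:ℝ) < x := hx.1
    have hx1 : x < 1/2 := hx.2
    have h1x : 0 < 1 - x := by linarith
    have hD1 : HasDerivAt (fun T : ℝ => T * C) C x := by
      simpa using (hasDerivAt_id x).mul_const C
    have hD3 : HasDerivAt (fun T : ℝ => negMulLog (1 - T)) (Real.log (1 - x) + 1) x := by
      have := (hasDerivAt_negMulLog h1x.ne').comp x ((hasDerivAt_id x).const_sub 1)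
      refine this.congr_deriv ?_
      simp; ring
    exact ((hD1.fun_add (hasDerivAt_negMulLog hx0.ne')).fun_add hD3).differentiableAt.differentiableWithinAt
  · intro x hx
    rw [interior_Icc] at hx
    have hx0 : (0:ℝ) < x := hx.1
    have hx1 : x < 1/2 := hx.2
    have h1x : 0 < 1 - x := by linarith
    have hD1 : HasDerivAt (fun T : ℝ => T * C) C x := by
      simpa using (hasDerivAt_id x).mul_const C
    have hD3 : HasDerivAt (fun T : ℝ => negMulLog (1 - T)) (Real.log (1 - x) + 1) x := by
      have := (hasDerivAt_negMulLog h1x.ne').comp x ((hasDerivAt_id x).const_sub 1)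
      refine this.congr_deriv ?_
      simp; ring
    rw [((hD1.fun_add (hasDerivAt_negMulLog hx0.ne')).fun_add hD3).deriv]
    have hlog : Real.log x ≤ Real.log (1 - x) := Real.log_le_log hx0 (by linarith)
    linarith

lemma g2_mono {C : ℝ} (hC : 0 ≤ C) :
    MonotoneOn (fun T : ℝ => T * (C + 1) + negMulLog T) (Set.Icc 0 (1/2)) := by
  apply monotoneOn_of_deriv_nonneg (convex_Icc 0 (1/2))
  · exact ((continuous_id.mul continuous_const).add continuous_negMulLog).continuousOn
  · intro x hx
    rw [interior_Icc] at hx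
    have hD1 : HasDerivAt (fun T : ℝ => T * (C + 1)) (C + 1) x := by
      simpa using (hasDerivAt_id x).mul_const (C + 1)
    exact (hD1.fun_add (hasDerivAt_negMulLog (ne_of_gt hx.1))).differentiableAt.differentiableWithinAt
  · intro x hx
    rw [interior_Icc] at hx
    have hD1 : HasDerivAt (fun T : ℝ => T * (C + 1)) (C + 1) x := by
      simpa using (hasDerivAt_id x).mul_const (C + 1)
    rw [(hD1.fun_add (hasDerivAt_negMulLog (ne_of_gt hx.1))).deriv]
    have : Real.log x ≤ 0 := Real.log_nonpos hx.1.le (by linarith [hx.2])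
    linarith

theorem entropy_bdd_diff {𝒯 : Type*} [Fintype 𝒯] (p q : 𝒯 → ℝ)
    (hp0 : ∀ t, 0 ≤ p t) (hp1 : ∑ t, p t = 1)
    (hq0 : ∀ t, 0 ≤ q t) (hq1 : ∑ t, q t = 1)
    (m : ℕ) (hm : 2 ≤ m)
    (hT : ∑ t, max (p t - q t) 0 ≤ 1 / m) :
    ∑ t, negMulLog (p t) - ∑ t, negMulLog (q t)
      ≤ (Fintype.card 𝒯 : ℝ) * Real.log m / m := by
  classical
  have hmR : (2 : ℝ) ≤ (m : ℝ) := by exact_mod_cast hm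
  have hmpos : (0 : ℝ) < (m : ℝ) := by linarith
  have hlogm : 0 ≤ Real.log m := Real.log_nonneg (by linarith)
  set d := Fintype.card 𝒯 with hd
  set Sp := Finset.univ.filter (fun t => q t < p t) with hSp
  set Sn := Finset.univ.filter (fun t => p t < q t) with hSn
  set T := ∑ t ∈ Sp, (p t - q t) with hTdef
  have hp1' : ∀ t, p t ≤ 1 := fun t => by
    calc p t ≤ ∑ t', p t' := Finset.single_le_sum (fun t' _ => hp0 t') (Finset.mem_univ t)
      _ = 1 := hp1
  have hq1' : ∀ t, q t ≤ 1 := fun t => by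
    calc q t ≤ ∑ t', q t' := Finset.single_le_sum (fun t' _ => hq0 t') (Finset.mem_univ t)
      _ = 1 := hq1
  have hsum0 : ∑ t, (p t - q t) = 0 := by
    rw [Finset.sum_sub_distrib, hp1, hq1]; ring
  have hTmax : T = ∑ t, max (p t - q t) 0 := by
    rw [hTdef, hSp, Finset.sum_filter]
    apply Finset.sum_congr rfl
    intro t _
    by_cases h : q t < p t
    · simp [h, max_eq_left (by linarith : (0:ℝ) ≤ p t - q t)]
    · simp [h, max_eq_right (by linarith [not_lt.1 h] : p t - q t ≤ (0:ℝ))]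
  have hTle : T ≤ 1 / m := hTmax ▸ hT
  have hT0 : 0 ≤ T := Finset.sum_nonneg fun t ht => by
    have := (Finset.mem_filter.1 ht).2
    linarith
  have hdisj : Disjoint Sp Sn := by
    rw [Finset.disjoint_left]
    intro t htp htn
    have h1 := (Finset.mem_filter.1 htp).2
    have h2 := (Finset.mem_filter.1 htn).2
    linarith
  have hSnSub : Sn ⊆ Finset.univ.filter (fun t => ¬ q t < p t) := by
    intro t ht
    rw [Finset.mem_filter]
    refine ⟨Finset.mem_univ t, ?_⟩
    have := (Finset.mem_filter.1 ht).2
    intro h; linarith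
  have key0 : T = ∑ t ∈ Sn, (q t - p t) := by
    have h1 := Finset.sum_filter_add_sum_filter_not Finset.univ
      (fun t => q t < p t) (fun t => p t - q t)
    rw [hsum0] at h1
    have h2 : ∑ t ∈ Finset.univ.filter (fun t => ¬ q t < p t), (p t - q t)
        = ∑ t ∈ Sn, (p t - q t) := by
      symm
      apply Finset.sum_subset hSnSub
      intro t ht htn
      have h3 := (Finset.mem_filter.1 ht).2
      have h4 : ¬ p t < q t := fun hc => htn (by
        rw [hSn, Finset.mem_filter]; exact ⟨Finset.mem_univ t, hc⟩)
      have : p t = q t := le_antisymm (not_lt.1 h3) (not_lt.1 h4)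
      linarith [this]
    rw [h2] at h1
    have : ∑ t ∈ Sn, (q t - p t) = - ∑ t ∈ Sn, (p t - q t) := by
      rw [← Finset.sum_neg_distrib]
      apply Finset.sum_congr rfl; intro t _; ring
    rw [this, hTdef]
    linarith
  have hLHS : ∑ t, negMulLog (p t) - ∑ t, negMulLog (q t)
      = ∑ t ∈ Sp, (negMulLog (p t) - negMulLog (q t))
        + ∑ t ∈ Sn, (negMulLog (p t) - negMulLog (q t)) := by
    rw [← Finset.sum_sub_distrib]
    rw [← Finset.sum_filter_add_sum_filter_not Finset.univ (fun t => q t < p t)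
      (fun t => negMulLog (p t) - negMulLog (q t))]
    congr 1
    symm
    apply Finset.sum_subset hSnSub
    intro t ht htn
    have h3 := (Finset.mem_filter.1 ht).2
    have h4 : ¬ p t < q t := fun hc => htn (by
      rw [hSn, Finset.mem_filter]; exact ⟨Finset.mem_univ t, hc⟩)
    have : p t = q t := le_antisymm (not_lt.1 h3) (not_lt.1 h4)
    rw [this]; ring
  rcases Finset.eq_empty_or_nonempty Sp with hSpe | hSpne
  · -- no positive part: p = q
    have hTz : T = 0 := by rw [hTdef, hSpe]; simp
    have hSne : Sn = ∅ := by
      by_contra hne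
      obtain ⟨t0, ht0⟩ := Finset.nonempty_iff_ne_empty.2 hne
      have hpos : 0 < q t0 - p t0 := by
        have := (Finset.mem_filter.1 ht0).2; linarith
      have : 0 < ∑ t ∈ Sn, (q t - p t) := Finset.sum_pos' (fun t ht => by
        have := (Finset.mem_filter.1 ht).2; linarith) ⟨t0, ht0, hpos⟩
      rw [← key0, hTz] at this
      exact lt_irrefl _ this
    rw [hLHS, hSpe, hSne]
    simp
    positivity
  · -- Sp nonempty
    have hTpos : 0 < T := Finset.sum_pos (fun t ht => by
      have := (Finset.mem_filter.1 ht).2; linarith) hSpne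
    have hSnne : Sn.Nonempty := by
      rcases Finset.eq_empty_or_nonempty Sn with hSne | h
      · rw [key0, hSne] at hTpos; simp at hTpos
      · exact h
    set k := Sp.card with hk
    have hkpos : 0 < k := Finset.card_pos.2 hSpne
    have hkR : (0:ℝ) < (k:ℝ) := by exact_mod_cast hkpos
    have hcard : k + Sn.card ≤ d := by
      rw [hd, hk, ← Finset.card_union_of_disjoint hdisj]
      exact Finset.card_le_card (Finset.subset_univ _)
    -- Jensen bound on the positive part
    have bound1 : ∑ t ∈ Sp, (negMulLog (p t) - negMulLog (q t))
        ≤ T * Real.log k + negMulLog T := by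
      have step1 : ∑ t ∈ Sp, (negMulLog (p t) - negMulLog (q t))
          ≤ ∑ t ∈ Sp, negMulLog (p t - q t) := by
        apply Finset.sum_le_sum
        intro t ht
        exact negMulLog_sub_le (hq0 t) (le_of_lt (Finset.mem_filter.1 ht).2)
      have step2 : ∑ t ∈ Sp, negMulLog (p t - q t)
          ≤ (k : ℝ) * negMulLog (T / k) := by
        have := sum_negMulLog_le Sp hSpne (fun t => p t - q t)
          (fun t ht => by
            have := (Finset.mem_filter.1 ht).2; linarith)
        rw [← hTdef] at this
        exact this
      have step3 : (k : ℝ) * negMulLog (T / k) = T * Real.log k + negMulLog T := by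
        rw [negMulLog, Real.log_div hTpos.ne' hkR.ne']
        field_simp [negMulLog]
        simp only [negMulLog]; ring
      linarith
    have hThalf : T ≤ 1 / 2 := by
      calc T ≤ 1 / m := hTle
        _ ≤ 1 / 2 := by
          apply div_le_div_of_nonneg_left (by norm_num) (by norm_num) hmR
    have hmemT : T ∈ Set.Icc (0:ℝ) (1/2) := ⟨hT0, hThalf⟩
    have hmemM : (1 : ℝ) / m ∈ Set.Icc (0:ℝ) (1/2) := by
      constructor
      · positivity
      · apply div_le_div_of_nonneg_left (by norm_num) (by norm_num) hmR
    rcases Nat.lt_or_ge Sn.card 2 with hl1 | hl2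
    · -- exactly one negative index
      have hl : Sn.card = 1 := le_antisymm (Nat.lt_succ_iff.1 hl1) (Finset.card_pos.2 hSnne)
      obtain ⟨t0, ht0⟩ := Finset.card_eq_one.1 hl
      have hqp : q t0 - p t0 = T := by rw [key0, ht0]; simp
      have hd2 : 2 ≤ d := by omega
      have hdR : (2:ℝ) ≤ (d:ℝ) := by exact_mod_cast hd2
      have hkd : (k : ℝ) ≤ (d : ℝ) - 1 := by
        have h5 : k + 1 ≤ d := by omega
        have : ((k + 1 : ℕ) : ℝ) ≤ (d : ℝ) := by exact_mod_cast h5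
        push_cast at this
        linarith
      have hlogk : Real.log k ≤ Real.log ((d:ℝ) - 1) :=
        Real.log_le_log hkR (by linarith)
      have hC : 0 ≤ Real.log ((d:ℝ) - 1) := Real.log_nonneg (by linarith)
      have hbound3 : negMulLog (p t0) - negMulLog (q t0) ≤ negMulLog (1 - T) := by
        have hpt : p t0 = q t0 - T := by linarith
        rw [hpt]
        exact negMulLog_shift_le hT0 (by linarith [hp0 t0]) (hq1' t0)
      have hSnsum : ∑ t ∈ Sn, (negMulLog (p t) - negMulLog (q t))
          = negMulLog (p t0) - negMulLog (q t0) := by rw [ht0]; simp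
      have hchain : ∑ t, negMulLog (p t) - ∑ t, negMulLog (q t)
          ≤ T * Real.log ((d:ℝ) - 1) + negMulLog T + negMulLog (1 - T) := by
        rw [hLHS, hSnsum]
        have h6 : T * Real.log k ≤ T * Real.log ((d:ℝ) - 1) :=
          mul_le_mul_of_nonneg_left hlogk hT0
        linarith
      have hmono := g1_mono hC hmemT hmemM hTle
      simp only at hmono
      have e1 : negMulLog (1/(m:ℝ)) = Real.log m / m := by
        rw [negMulLog, one_div, Real.log_inv]; field_simp
      have hm1pos : (0:ℝ) < (m:ℝ) - 1 := by linarith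
      have e2 : negMulLog (1 - 1/(m:ℝ))
          = (((m:ℝ) - 1)/m) * Real.log ((m:ℝ)/((m:ℝ) - 1)) := by
        have h1 : (1 : ℝ) - 1/m = ((m:ℝ) - 1)/m := by field_simp
        rw [h1, negMulLog, Real.log_div hm1pos.ne' hmpos.ne',
          Real.log_div hmpos.ne' hm1pos.ne']
        ring
      have hX : Real.log ((d:ℝ) - 1) + Real.log m
          + ((m:ℝ) - 1) * Real.log ((m:ℝ)/((m:ℝ) - 1)) ≤ (d:ℝ) * Real.log m := by
        have hA := L5a hm
        have hB := L5b hd2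
        have hlog2m : Real.log 2 ≤ Real.log m := Real.log_le_log (by norm_num) hmR
        have h7 : ((d:ℝ) - 2) * Real.log 2 ≤ ((d:ℝ) - 2) * Real.log m :=
          mul_le_mul_of_nonneg_left hlog2m (by linarith)
        linarith
      have final : 1/(m:ℝ) * Real.log ((d:ℝ) - 1) + negMulLog (1/(m:ℝ))
          + negMulLog (1 - 1/(m:ℝ)) ≤ (d:ℝ) * Real.log m / m := by
        rw [e1, e2]
        rw [show 1/(m:ℝ) * Real.log ((d:ℝ) - 1) + Real.log m / m
            + (((m:ℝ) - 1)/m) * Real.log ((m:ℝ)/((m:ℝ) - 1))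
            = (Real.log ((d:ℝ) - 1) + Real.log m
              + ((m:ℝ) - 1) * Real.log ((m:ℝ)/((m:ℝ) - 1))) / m by field_simp <;> ring]
        exact (div_le_div_iff_of_pos_right hmpos).2 hX
      calc ∑ t, negMulLog (p t) - ∑ t, negMulLog (q t)
          ≤ T * Real.log ((d:ℝ) - 1) + negMulLog T + negMulLog (1 - T) := hchain
        _ ≤ 1/(m:ℝ) * Real.log ((d:ℝ) - 1) + negMulLog (1/(m:ℝ))
            + negMulLog (1 - 1/(m:ℝ)) := hmono
        _ ≤ (d:ℝ) * Real.log m / m := final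
    · -- at least two negative indices
      have hd3 : 3 ≤ d := by omega
      have hdR : (3:ℝ) ≤ (d:ℝ) := by exact_mod_cast hd3
      have hkd : (k : ℝ) ≤ (d : ℝ) - 2 := by
        have h5 : k + 2 ≤ d := by omega
        have : ((k + 2 : ℕ) : ℝ) ≤ (d : ℝ) := by exact_mod_cast h5
        push_cast at this
        linarith
      have hlogk : Real.log k ≤ Real.log ((d:ℝ) - 2) :=
        Real.log_le_log hkR (by linarith)
      have hC : 0 ≤ Real.log ((d:ℝ) - 2) := Real.log_nonneg (by linarith)
      have bound3 : ∑ t ∈ Sn, (negMulLog (p t) - negMulLog (q t)) ≤ T := by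
        calc ∑ t ∈ Sn, (negMulLog (p t) - negMulLog (q t))
            ≤ ∑ t ∈ Sn, (q t - p t) := by
              apply Finset.sum_le_sum
              intro t ht
              exact negMulLog_rev_le (hp0 t)
                (le_of_lt (Finset.mem_filter.1 ht).2) (hq1' t)
          _ = T := key0.symm
      have hchain : ∑ t, negMulLog (p t) - ∑ t, negMulLog (q t)
          ≤ T * (Real.log ((d:ℝ) - 2) + 1) + negMulLog T := by
        rw [hLHS]
        have h6 : T * Real.log k ≤ T * Real.log ((d:ℝ) - 2) :=
          mul_le_mul_of_nonneg_left hlogk hT0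
        have h7 : T * (Real.log ((d:ℝ) - 2) + 1) = T * Real.log ((d:ℝ) - 2) + T := by
          ring
        linarith
      have hmono := g2_mono hC hmemT hmemM hTle
      simp only at hmono
      have e1 : negMulLog (1/(m:ℝ)) = Real.log m / m := by
        rw [negMulLog, one_div, Real.log_inv]; field_simp
      have hX : Real.log ((d:ℝ) - 2) + 1 + Real.log m ≤ (d:ℝ) * Real.log m := by
        have hB := L5c hd3
        have hlog2m : Real.log 2 ≤ Real.log m := Real.log_le_log (by norm_num) hmR
        have h7 : ((d:ℝ) - 1) * Real.log 2 ≤ ((d:ℝ) - 1) * Real.log m :=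
          mul_le_mul_of_nonneg_left hlog2m (by linarith)
        linarith
      have final : 1/(m:ℝ) * (Real.log ((d:ℝ) - 2) + 1) + negMulLog (1/(m:ℝ))
          ≤ (d:ℝ) * Real.log m / m := by
        rw [e1]
        rw [show 1/(m:ℝ) * (Real.log ((d:ℝ) - 2) + 1) + Real.log m / m
            = (Real.log ((d:ℝ) - 2) + 1 + Real.log m) / m by field_simp <;> ring]
        exact (div_le_div_iff_of_pos_right hmpos).2 hX
      calc ∑ t, negMulLog (p t) - ∑ t, negMulLog (q t)
          ≤ T * (Real.log ((d:ℝ) - 2) + 1) + negMulLog T := hchain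
        _ ≤ 1/(m:ℝ) * (Real.log ((d:ℝ) - 2) + 1) + negMulLog (1/(m:ℝ)) := hmono
        _ ≤ (d:ℝ) * Real.log m / m := final


lemma negMulLog_le_one {x : ℝ} (h0 : 0 ≤ x) (h1 : x ≤ 1) : negMulLog x ≤ 1 := by
  rcases eq_or_lt_of_le h0 with rfl | hx
  · simp
  have : Real.log x = -Real.log x⁻¹ := by rw [Real.log_inv]; ring
  have hinv : Real.log x⁻¹ ≤ x⁻¹ - 1 := Real.log_le_sub_one_of_pos (by positivity)
  have : negMulLog x = x * Real.log x⁻¹ := by rw [negMulLog, Real.log_inv]; ring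
  rw [this]
  calc x * Real.log x⁻¹ ≤ x * (x⁻¹ - 1) := mul_le_mul_of_nonneg_left hinv h0
    _ = 1 - x := by field_simp
    _ ≤ 1 := by linarith

/-- **Lemma 1 of the supplementary material (McDiarmid bound).** For the plug-in
entropy estimate `Ĥ(v) = H(t ↦ (1/m) ∑ i, q (v i) t)` of an i.i.d. sample
`v ∼ μ^{⊗m}`, with probability at least `1 - δ` the deviation of `Ĥ` from its
expectation is at most `card 𝒯 * log m * √(log (2/δ)) / √(2m)`. -/
theorem plugin_entropy_concentration
    {𝒳 : Type*} [MeasurableSpace 𝒳] (μ : Measure 𝒳) [IsProbabilityMeasure μ]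
    {𝒯 : Type*} [Fintype 𝒯]
    (q : 𝒳 → 𝒯 → ℝ)
    (hq : ∀ x t, 0 ≤ q x t) (hqsum : ∀ x, ∑ t, q x t = 1)
    (hqm : ∀ t, Measurable fun x => q x t)
    (m : ℕ) (hm : 2 ≤ m)
    (Hhat : (Fin m → 𝒳) → ℝ)
    (hHhat : ∀ v, Hhat v =
      ∑ t, -((1 / (m : ℝ)) * ∑ i, q (v i) t) *
        Real.log ((1 / (m : ℝ)) * ∑ i, q (v i) t))
    (δ : ℝ) (hδ : δ ∈ Set.Ioo (0 : ℝ) 1) :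
    ENNReal.ofReal (1 - δ) ≤
      (Measure.pi fun _ : Fin m => μ)
        {v | |Hhat v - ∫ w, Hhat w ∂(Measure.pi fun _ : Fin m => μ)| ≤
          (Fintype.card 𝒯 : ℝ) * Real.log m * Real.sqrt (Real.log (2 / δ)) /
            Real.sqrt (2 * m)} := by
  classical
  obtain ⟨hδ0, hδ1⟩ := hδ
  have hmR : (2:ℝ) ≤ (m:ℝ) := by exact_mod_cast hm
  have hmpos : (0:ℝ) < m := by linarith
  have hne𝒳 : Nonempty 𝒳 := MeasureTheory.Measure.nonempty_of_neZero μ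
  obtain ⟨x₀⟩ := hne𝒳
  have hne𝒯 : Nonempty 𝒯 := by
    by_contra h
    have : ∑ t, q x₀ t = 0 := by
      rw [Finset.sum_eq_zero]
      intro t _
      exact absurd (Nonempty.intro t) h
    rw [hqsum x₀] at this
    norm_num at this
  set d := Fintype.card 𝒯 with hd
  have hd1 : 1 ≤ d := Fintype.card_pos
  have hdR : (1:ℝ) ≤ (d:ℝ) := by exact_mod_cast hd1
  have hlogm : 0 < Real.log m := Real.log_pos (by linarith)
  have hq1 : ∀ x t, q x t ≤ 1 := by
    intro x t
    calc q x t ≤ ∑ t', q x t' := Finset.single_le_sum (fun t' _ => hq x t') (Finset.mem_univ t)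
      _ = 1 := hqsum x
  -- the empirical mixture
  set P : (Fin m → 𝒳) → 𝒯 → ℝ := fun v t => (1 / (m : ℝ)) * ∑ i, q (v i) t with hP
  have hP0 : ∀ v t, 0 ≤ P v t := fun v t => by
    apply mul_nonneg (by positivity)
    exact Finset.sum_nonneg fun i _ => hq _ _
  have hPsum : ∀ v, ∑ t, P v t = 1 := by
    intro v
    rw [hP]
    simp only
    rw [← Finset.mul_sum, Finset.sum_comm]
    have h8 : ∀ i ∈ (Finset.univ : Finset (Fin m)), ∑ t, q (v i) t = 1 :=
      fun i _ => hqsum (v i)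
    rw [Finset.sum_congr rfl h8, Finset.sum_const]
    simp
    field_simp
  have hPle1 : ∀ v t, P v t ≤ 1 := by
    intro v t
    calc P v t ≤ ∑ t', P v t' :=
          Finset.single_le_sum (fun t' _ => hP0 v t') (Finset.mem_univ t)
      _ = 1 := hPsum v
  have hHeq : ∀ v, Hhat v = ∑ t, negMulLog (P v t) := by
    intro v
    rw [hHhat v]
    apply Finset.sum_congr rfl
    intro t _
    rw [negMulLog, hP]
  -- measurability
  have hHm : Measurable Hhat := by
    have : Hhat = fun v => ∑ t, negMulLog (P v t) := funext hHeq
    rw [this]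
    apply Finset.measurable_sum
    intro t _
    apply continuous_negMulLog.measurable.comp
    apply Measurable.const_mul
    apply Finset.measurable_sum
    intro i _
    exact (hqm t).comp (measurable_pi_apply i)
  -- boundedness
  have hHM : ∀ v, |Hhat v| ≤ (d : ℝ) := by
    intro v
    rw [hHeq v]
    have h1 : ∀ t, 0 ≤ negMulLog (P v t) := fun t =>
      negMulLog_nonneg (hP0 v t) (hPle1 v t)
    rw [abs_of_nonneg (Finset.sum_nonneg fun t _ => h1 t)]
    calc ∑ t, negMulLog (P v t) ≤ ∑ _t : 𝒯, (1:ℝ) := by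
          apply Finset.sum_le_sum
          intro t _
          exact negMulLog_le_one (hP0 v t) (hPle1 v t)
      _ = (d : ℝ) := by rw [Finset.sum_const]; simp [hd]
  -- bounded differences
  set c : ℝ := (d : ℝ) * Real.log m / m with hc
  have hcpos : 0 < c := by
    rw [hc]; positivity
  have hTbound : ∀ (v : Fin m → 𝒳) (i : Fin m) (x : 𝒳),
      ∑ t, max (P (Function.update v i x) t - P v t) 0 ≤ 1 / m := by
    intro v i x
    have hdiff : ∀ t, P (Function.update v i x) t - P v t
        = (1 / (m:ℝ)) * (q x t - q (v i) t) := by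
      intro t
      rw [hP]
      simp only
      rw [← mul_sub, ← Finset.sum_sub_distrib]
      congr 1
      rw [Finset.sum_congr rfl (fun j _ => rfl)]
      have : ∀ j ∈ Finset.univ, q (Function.update v i x j) t - q (v j) t
          = if j = i then q x t - q (v i) t else 0 := by
        intro j _
        by_cases hj : j = i
        · subst hj; simp
        · rw [Function.update_of_ne hj]; simp [hj]
      rw [Finset.sum_congr rfl this, Finset.sum_ite_eq' Finset.univ i]
      simp
    calc ∑ t, max (P (Function.update v i x) t - P v t) 0
        ≤ ∑ t, (1 / (m:ℝ)) * q x t := by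
          apply Finset.sum_le_sum
          intro t _
          rw [hdiff t]
          apply max_le
          · apply mul_le_mul_of_nonneg_left _ (by positivity)
            linarith [hq (v i) t]
          · exact mul_nonneg (by positivity) (hq x t)
      _ = 1 / m := by rw [← Finset.mul_sum, hqsum x]; ring
  have hbd : ∀ (v : Fin m → 𝒳) (i : Fin m) (x : 𝒳),
      |Hhat (Function.update v i x) - Hhat v| ≤ c := by
    intro v i x
    rw [abs_le]
    constructor
    · have h2 := entropy_bdd_diff (P v) (P (Function.update v i x))
        (hP0 v) (hPsum v) (hP0 _) (hPsum _) m hm (by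
          have := hTbound (Function.update v i x) i (v i)
          rw [show Function.update (Function.update v i x) i (v i) = v by
            funext j; by_cases hj : j = i
            · subst hj; simp
            · simp [Function.update_of_ne hj]] at this
          exact this)
      rw [hHeq, hHeq]
      rw [hc]
      linarith
    · have h1 := entropy_bdd_diff (P (Function.update v i x)) (P v)
        (hP0 _) (hPsum _) (hP0 v) (hPsum v) m hm (hTbound v i x)
      rw [hHeq, hHeq, hc]
      linarith
  -- the deviation bound
  set L : ℝ := Real.log (2 / δ) with hL
  have hLpos : 0 < L := by
    rw [hL]
    apply Real.log_pos
    rw [lt_div_iff₀ hδ0]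
    linarith
  set ε : ℝ := (d : ℝ) * Real.log m * Real.sqrt L / Real.sqrt (2 * m) with hε
  have hεpos : 0 < ε := by
    rw [hε]
    have h1 : 0 < Real.sqrt L := Real.sqrt_pos.2 hLpos
    have h2 : 0 < Real.sqrt (2 * m) := Real.sqrt_pos.2 (by positivity)
    positivity
  -- exponent computation
  have hexp : Real.exp (-2 * ε ^ 2 / (m * c ^ 2)) = δ / 2 := by
    have hε2 : ε ^ 2 = (d:ℝ) ^ 2 * Real.log m ^ 2 * L / (2 * m) := by
      rw [hε, div_pow, mul_pow, mul_pow, Real.sq_sqrt hLpos.le,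
        Real.sq_sqrt (by positivity : (0:ℝ) ≤ 2 * m)]
      try ring
    have hc2 : c ^ 2 = (d:ℝ) ^ 2 * Real.log m ^ 2 / m ^ 2 := by
      rw [hc, div_pow, mul_pow]
    have harg : -2 * ε ^ 2 / (m * c ^ 2) = -L := by
      rw [hε2, hc2]
      have hd0 : (0:ℝ) < (d:ℝ) := by linarith
      field_simp
      try ring
    rw [harg, Real.exp_neg, hL, Real.exp_log (by positivity), inv_div]
  set pr : Measure (Fin m → 𝒳) := Measure.pi fun _ : Fin m => μ with hpr
  obtain ⟨I, hI⟩ : ∃ I : ℝ, ∫ w, Hhat w ∂pr = I := ⟨_, rfl⟩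
  rw [hI]
  have hmn : 0 < m := by omega
  -- upper tail
  have hA := mcdiarmid_one_side μ m hmn Hhat hHm (d : ℝ) hHM c hcpos hbd ε hεpos
  rw [← hpr, hI, hexp] at hA
  -- lower tail, via -Hhat
  have hbdneg : ∀ (v : Fin m → 𝒳) (i : Fin m) (x : 𝒳),
      |(fun v => -Hhat v) (Function.update v i x) - (fun v => -Hhat v) v| ≤ c := by
    intro v i x
    simp only
    rw [show -Hhat (Function.update v i x) - -Hhat v
      = -(Hhat (Function.update v i x) - Hhat v) by ring, abs_neg]
    exact hbd v i x
  have hB := mcdiarmid_one_side μ m hmn (fun v => -Hhat v) hHm.neg (d : ℝ)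
    (fun v => by simpa using hHM v) c hcpos hbdneg ε hεpos
  rw [← hpr] at hB
  have hnegint : ∫ w, (fun v => -Hhat v) w ∂pr = -I := by
    simp only
    rw [integral_neg, hI]
  rw [hnegint, hexp] at hB
  -- event arithmetic
  set E : Set (Fin m → 𝒳) := {v | |Hhat v - I| ≤ ε} with hE
  have hEm : MeasurableSet E :=
    measurableSet_le ((hHm.sub measurable_const).abs) measurable_const
  have hcompl : Eᶜ ⊆ {v | ε ≤ Hhat v - I} ∪ {v | ε ≤ -Hhat v - -I} := by
    intro v hv
    simp only [hE, Set.mem_compl_iff, Set.mem_setOf_eq, not_le] at hv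
    rcases lt_abs.1 hv with h | h
    · left; exact le_of_lt h
    · right
      simp only [Set.mem_setOf_eq]
      linarith
  have h1 : pr Eᶜ ≤ pr {v | ε ≤ Hhat v - I} + pr {v | ε ≤ -Hhat v - -I} :=
    (measure_mono hcompl).trans (measure_union_le _ _)
  have h2 : (pr Eᶜ).toReal ≤ δ := by
    have hfin1 : pr {v | ε ≤ Hhat v - I} ≠ ⊤ := measure_ne_top _ _
    have hfin2 : pr {v | ε ≤ -Hhat v - -I} ≠ ⊤ := measure_ne_top _ _
    calc (pr Eᶜ).toReal
        ≤ (pr {v | ε ≤ Hhat v - I} + pr {v | ε ≤ -Hhat v - -I}).toReal :=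
          ENNReal.toReal_mono (by
            rw [ENNReal.add_ne_top]; exact ⟨hfin1, hfin2⟩) h1
      _ = (pr {v | ε ≤ Hhat v - I}).toReal + (pr {v | ε ≤ -Hhat v - -I}).toReal :=
          ENNReal.toReal_add hfin1 hfin2
      _ ≤ δ / 2 + δ / 2 := add_le_add hA hB
      _ = δ := by ring
  have h3 : (pr E).toReal + (pr Eᶜ).toReal = 1 := by
    have h4 := measure_add_measure_compl (μ := pr) hEm
    have h5 := congrArg ENNReal.toReal h4
    rw [ENNReal.toReal_add (measure_ne_top _ _) (measure_ne_top _ _)] at h5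
    simpa using h5
  apply ENNReal.ofReal_le_of_le_toReal
  linarith
end

section
/- Let 𝒯 be a finite type, let p be a pmf on 𝒯, and let m be a positive natural number. For a sample vector t⃗ : Fin m → 𝒯, define the empirical pmf p̂_{t⃗}(t) = (card {i : t⃗ i = t}) / m, and the plug-in entropy estimate Ĥ(t⃗) = H(p̂_{t⃗}). Let 𝔼[Ĥ] = ∑_{t⃗ ∈ 𝒯^{Fin m}} (∏_i p (t⃗ i)) * Ĥ(t⃗) be the expectation of the plug-in estimate over an i.i.d. sample of size m from p. Then |H(p) − 𝔼[Ĥ]| ≤ Real.log (1 + (card 𝒯 − 1) / m) ≤ (card 𝒯 − 1) / m. -/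
set_option linter.unusedSectionVars false
set_option linter.unusedVariables false
set_option maxHeartbeats 1000000

open Finset

section PaninskiAux

variable {𝒯 : Type*} [Fintype 𝒯] [DecidableEq 𝒯]

/-- Factorization of a sum over a function space into a product of sums. -/
private lemma paninski_sum_pi_prod (m : ℕ) (g : Fin m → 𝒯 → ℝ) :
    ∑ v : Fin m → 𝒯, ∏ i, g i (v i) = ∏ i, ∑ t, g i t := by
  rw [Finset.prod_univ_sum, Fintype.piFinset_univ]

private lemma paninski_sum_w (p : 𝒯 → ℝ) (hpsum : ∑ t, p t = 1) (m : ℕ) :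
    ∑ v : Fin m → 𝒯, ∏ i, p (v i) = 1 := by
  rw [paninski_sum_pi_prod]; simp [hpsum]

private lemma paninski_E_ind (p : 𝒯 → ℝ) (hpsum : ∑ t, p t = 1) {m : ℕ} (i : Fin m) (t : 𝒯) :
    ∑ v : Fin m → 𝒯, (∏ j, p (v j)) * (if v i = t then (1:ℝ) else 0) = p t := by
  have key : ∀ v : Fin m → 𝒯, (∏ j, p (v j)) * (if v i = t then (1:ℝ) else 0)
      = ∏ j, (if j = i then (if v j = t then p (v j) else 0) else p (v j)) := by
    intro v
    by_cases h : v i = t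
    · rw [if_pos h, mul_one]
      refine Finset.prod_congr rfl fun j _ => ?_
      by_cases hj : j = i
      · subst hj; simp [h]
      · simp [hj]
    · rw [if_neg h, mul_zero]
      exact (Finset.prod_eq_zero (Finset.mem_univ i) (by simp [h])).symm
  rw [Finset.sum_congr rfl fun v _ => key v,
    paninski_sum_pi_prod m fun j x => if j = i then (if x = t then p x else 0) else p x]
  have : ∀ j : Fin m, (∑ x, if j = i then (if x = t then p x else 0) else p x)
      = if j = i then p t else 1 := by
    intro j
    by_cases hj : j = i <;> simp [hj, hpsum]
  rw [Finset.prod_congr rfl fun j _ => this j, Finset.prod_ite_eq' Finset.univ i fun _ => p t]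
  simp

private lemma paninski_E_ind2 (p : 𝒯 → ℝ) (hpsum : ∑ t, p t = 1) {m : ℕ} {i j : Fin m}
    (hij : i ≠ j) (t : 𝒯) :
    ∑ v : Fin m → 𝒯,
      (∏ k, p (v k)) * ((if v i = t then (1:ℝ) else 0) * (if v j = t then (1:ℝ) else 0))
      = p t * p t := by
  have key : ∀ v : Fin m → 𝒯,
      (∏ k, p (v k)) * ((if v i = t then (1:ℝ) else 0) * (if v j = t then (1:ℝ) else 0))
      = ∏ k, (if k = i ∨ k = j then (if v k = t then p (v k) else 0) else p (v k)) := by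
    intro v
    by_cases hi : v i = t
    · by_cases hj : v j = t
      · rw [if_pos hi, if_pos hj, mul_one, mul_one]
        refine Finset.prod_congr rfl fun k _ => ?_
        by_cases hk : k = i ∨ k = j
        · rcases hk with hk | hk <;> subst hk <;> simp [hi, hj]
        · simp [hk]
      · rw [if_neg hj, mul_zero, mul_zero]
        exact (Finset.prod_eq_zero (Finset.mem_univ j) (by simp [hj])).symm
    · rw [if_neg hi, zero_mul, mul_zero]
      exact (Finset.prod_eq_zero (Finset.mem_univ i) (by simp [hi])).symm
  rw [Finset.sum_congr rfl fun v _ => key v,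
    paninski_sum_pi_prod m fun k x => if k = i ∨ k = j then (if x = t then p x else 0) else p x]
  have step : ∀ k : Fin m, (∑ x, if k = i ∨ k = j then (if x = t then p x else 0) else p x)
      = if k = i ∨ k = j then p t else 1 := by
    intro k; by_cases hk : k = i ∨ k = j <;> simp [hk, hpsum]
  rw [Finset.prod_congr rfl fun k _ => step k]
  rw [← Finset.mul_prod_erase Finset.univ _ (Finset.mem_univ i)]
  rw [← Finset.mul_prod_erase _ _ (Finset.mem_erase.2 ⟨hij.symm, Finset.mem_univ j⟩)]
  rw [if_pos (Or.inl rfl), if_pos (Or.inr rfl)]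
  rw [Finset.prod_eq_one, mul_one]
  intro k hk
  simp only [Finset.mem_erase] at hk
  rw [if_neg]
  push_neg
  exact ⟨hk.2.1, hk.1⟩

private lemma paninski_card_cast (m : ℕ) (v : Fin m → 𝒯) (t : 𝒯) :
    (((Finset.univ.filter fun i => v i = t).card : ℕ) : ℝ)
      = ∑ i, if v i = t then (1:ℝ) else 0 := by
  rw [Finset.card_filter]
  push_cast
  rfl

private lemma paninski_E_c (p : 𝒯 → ℝ) (hpsum : ∑ t, p t = 1) (m : ℕ) (t : 𝒯) :
    ∑ v : Fin m → 𝒯, (∏ j, p (v j)) * (((Finset.univ.filter fun i => v i = t).card : ℝ))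
      = m * p t := by
  have : ∀ v : Fin m → 𝒯, (∏ j, p (v j)) * (((Finset.univ.filter fun i => v i = t).card : ℝ))
      = ∑ i, (∏ j, p (v j)) * (if v i = t then (1:ℝ) else 0) := by
    intro v; rw [paninski_card_cast, Finset.mul_sum]
  rw [Finset.sum_congr rfl fun v _ => this v, Finset.sum_comm,
    Finset.sum_congr rfl fun i _ => paninski_E_ind p hpsum i t]
  simp [mul_comm]

private lemma paninski_E_c2 (p : 𝒯 → ℝ) (hpsum : ∑ t, p t = 1) (m : ℕ) (t : 𝒯) :
    ∑ v : Fin m → 𝒯, (∏ j, p (v j)) * (((Finset.univ.filter fun i => v i = t).card : ℝ))^2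
      = m * p t + ((m:ℝ)^2 - m) * (p t)^2 := by
  have key : ∀ v : Fin m → 𝒯,
      (∏ j, p (v j)) * (((Finset.univ.filter fun i => v i = t).card : ℝ))^2
      = ∑ i, ∑ j, (∏ k, p (v k)) *
          ((if v i = t then (1:ℝ) else 0) * (if v j = t then (1:ℝ) else 0)) := by
    intro v
    rw [paninski_card_cast, sq, Finset.sum_mul_sum]
    rw [Finset.mul_sum]
    exact Finset.sum_congr rfl fun i _ => by rw [Finset.mul_sum]
  rw [Finset.sum_congr rfl fun v _ => key v, Finset.sum_comm]
  have inner : ∀ i : Fin m, ∑ v : Fin m → 𝒯, ∑ j,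
      (∏ k, p (v k)) * ((if v i = t then (1:ℝ) else 0) * (if v j = t then (1:ℝ) else 0))
      = m * (p t)^2 + (p t - (p t)^2) := by
    intro i
    rw [Finset.sum_comm]
    have h1 : ∀ j : Fin m, ∑ v : Fin m → 𝒯,
        (∏ k, p (v k)) * ((if v i = t then (1:ℝ) else 0) * (if v j = t then (1:ℝ) else 0))
        = if i = j then p t else (p t)^2 := by
      intro j
      by_cases hij : i = j
      · subst hij
        rw [if_pos rfl]
        have : ∀ v : Fin m → 𝒯,
            (∏ k, p (v k)) * ((if v i = t then (1:ℝ) else 0) * (if v i = t then (1:ℝ) else 0))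
            = (∏ k, p (v k)) * (if v i = t then (1:ℝ) else 0) := by
          intro v; by_cases h : v i = t <;> simp [h]
        rw [Finset.sum_congr rfl fun v _ => this v]
        exact paninski_E_ind p hpsum i t
      · rw [if_neg hij, sq]
        exact paninski_E_ind2 p hpsum hij t
    rw [Finset.sum_congr rfl fun j _ => h1 j]
    have h2 : ∀ j : Fin m, (if i = j then p t else (p t)^2)
        = (p t)^2 + (if i = j then p t - (p t)^2 else 0) := by
      intro j; by_cases h : i = j <;> simp [h]
    rw [Finset.sum_congr rfl fun j _ => h2 j, Finset.sum_add_distrib,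
      Finset.sum_const, Finset.sum_ite_eq]
    simp [mul_comm]
  rw [Finset.sum_congr rfl fun i _ => inner i, Finset.sum_const]
  simp only [Finset.card_univ, Fintype.card_fin, nsmul_eq_mul]
  ring

private lemma paninski_E_r (p : 𝒯 → ℝ) (hpsum : ∑ t, p t = 1) (m : ℕ) (hm : 0 < m) :
    ∑ v : Fin m → 𝒯, (∏ j, p (v j)) *
      (∑ t ∈ Finset.univ.filter fun t => p t ≠ 0,
        ((((Finset.univ.filter fun i => v i = t).card : ℝ)) / m)^2 / p t)
    = 1 + (((Finset.univ.filter fun t : 𝒯 => p t ≠ 0).card : ℝ) - 1) / m := by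
  have hm' : (m:ℝ) ≠ 0 := Nat.cast_ne_zero.2 hm.ne'
  have expand : ∀ v : Fin m → 𝒯, (∏ j, p (v j)) *
      (∑ t ∈ Finset.univ.filter fun t => p t ≠ 0,
        ((((Finset.univ.filter fun i => v i = t).card : ℝ)) / m)^2 / p t)
      = ∑ t ∈ Finset.univ.filter fun t => p t ≠ 0,
        ((∏ j, p (v j)) * (((Finset.univ.filter fun i => v i = t).card : ℝ))^2)
          * (1 / ((m:ℝ)^2 * p t)) := by
    intro v
    rw [Finset.mul_sum]
    refine Finset.sum_congr rfl fun t ht => ?_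
    have hpt : p t ≠ 0 := (Finset.mem_filter.1 ht).2
    field_simp
  rw [Finset.sum_congr rfl fun v _ => expand v, Finset.sum_comm]
  have inner : ∀ t ∈ Finset.univ.filter fun t : 𝒯 => p t ≠ 0,
      ∑ v : Fin m → 𝒯,
        ((∏ j, p (v j)) * (((Finset.univ.filter fun i => v i = t).card : ℝ))^2)
          * (1 / ((m:ℝ)^2 * p t))
      = 1 / m + (1 - 1/m) * p t := by
    intro t ht
    have hpt : p t ≠ 0 := (Finset.mem_filter.1 ht).2
    rw [← Finset.sum_mul, paninski_E_c2 p hpsum m t]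
    field_simp
  rw [Finset.sum_congr rfl inner, Finset.sum_add_distrib, Finset.sum_const, ← Finset.mul_sum,
    Finset.sum_filter_ne_zero, hpsum, nsmul_eq_mul]
  field_simp
  ring

private lemma paninski_gibbs_jensen (p q : 𝒯 → ℝ) (hp : ∀ t, 0 ≤ p t) (hpsum : ∑ t, p t = 1)
    (hq : ∀ t, 0 ≤ q t) (hqsum : ∑ t, q t = 1)
    (hsupp : ∀ t, q t ≠ 0 → p t ≠ 0) :
    0 ≤ ∑ t, q t * (Real.log (q t) - Real.log (p t)) ∧
    ∑ t, q t * (Real.log (q t) - Real.log (p t))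
      ≤ Real.log (∑ t ∈ Finset.univ.filter fun t => p t ≠ 0, (q t)^2 / p t) ∧
    0 < ∑ t ∈ Finset.univ.filter fun t => p t ≠ 0, (q t)^2 / p t := by
  classical
  set A : Finset 𝒯 := Finset.univ.filter fun t => q t ≠ 0 with hA
  have hmemA : ∀ t ∈ A, 0 < q t ∧ 0 < p t := by
    intro t ht
    rw [hA, Finset.mem_filter] at ht
    exact ⟨lt_of_le_of_ne (hq t) (Ne.symm ht.2), lt_of_le_of_ne (hp t) (Ne.symm (hsupp t ht.2))⟩
  have hDA : ∑ t, q t * (Real.log (q t) - Real.log (p t))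
      = ∑ t ∈ A, q t * (Real.log (q t) - Real.log (p t)) := by
    rw [hA]
    refine (Finset.sum_filter_of_ne ?_).symm
    intro t _ h hq0
    exact h (by rw [hq0]; ring)
  have hqA : ∑ t ∈ A, q t = 1 := by
    rw [hA]; rw [Finset.sum_filter_ne_zero]; exact hqsum
  have hAne : A.Nonempty := by
    by_contra h
    rw [Finset.not_nonempty_iff_eq_empty] at h
    rw [h, Finset.sum_empty] at hqA
    norm_num at hqA
  have hAsub : A ⊆ Finset.univ.filter fun t => p t ≠ 0 := by
    intro t ht
    rw [hA, Finset.mem_filter] at ht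
    exact Finset.mem_filter.2 ⟨Finset.mem_univ t, hsupp t ht.2⟩
  have hposA : 0 < ∑ t ∈ A, (q t)^2 / p t := by
    refine Finset.sum_pos ?_ hAne
    intro t ht
    exact div_pos (pow_pos (hmemA t ht).1 2) (hmemA t ht).2
  have hle : ∑ t ∈ A, (q t)^2 / p t
      ≤ ∑ t ∈ Finset.univ.filter (fun t => p t ≠ 0), (q t)^2 / p t := by
    refine Finset.sum_le_sum_of_subset_of_nonneg hAsub ?_
    intro t ht _
    have hpt : 0 < p t := lt_of_le_of_ne (hp t) (Ne.symm (Finset.mem_filter.1 ht).2)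
    positivity
  have hrpos : 0 < ∑ t ∈ Finset.univ.filter (fun t => p t ≠ 0), (q t)^2 / p t :=
    lt_of_lt_of_le hposA hle
  refine ⟨?_, ?_, hrpos⟩
  · rw [hDA]
    have key : ∀ t ∈ A, q t - p t ≤ q t * (Real.log (q t) - Real.log (p t)) := by
      intro t ht
      obtain ⟨hq0, hp0⟩ := hmemA t ht
      have hx : (0:ℝ) < q t / p t := div_pos hq0 hp0
      have hlog := Real.one_sub_inv_le_log_of_pos hx
      have hinv : (q t / p t)⁻¹ = p t / q t := by
        field_simp
      rw [hinv] at hlog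
      have hmul := mul_le_mul_of_nonneg_left hlog (le_of_lt hq0)
      have heq : q t * (1 - p t / q t) = q t - p t := by
        field_simp
      rw [heq] at hmul
      rw [← Real.log_div hq0.ne' hp0.ne']
      exact hmul
    have h1 : ∑ t ∈ A, (q t - p t) ≤ ∑ t ∈ A, q t * (Real.log (q t) - Real.log (p t)) :=
      Finset.sum_le_sum key
    have h2 : ∑ t ∈ A, p t ≤ 1 := by
      rw [← hpsum]
      exact Finset.sum_le_sum_of_subset_of_nonneg (Finset.subset_univ A) fun t _ _ => hp t
    have h3 : (0:ℝ) ≤ ∑ t ∈ A, (q t - p t) := by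
      rw [Finset.sum_sub_distrib, hqA]
      linarith
    linarith
  · rw [hDA]
    have hjen := (strictConcaveOn_log_Ioi.concaveOn).le_map_sum
      (t := A) (w := q) (p := fun t => q t / p t)
      (fun t ht => hq t) hqA
      (fun t ht => Set.mem_Ioi.2 (div_pos (hmemA t ht).1 (hmemA t ht).2))
    simp only [smul_eq_mul] at hjen
    have lhs_eq : ∑ t ∈ A, q t * Real.log (q t / p t)
        = ∑ t ∈ A, q t * (Real.log (q t) - Real.log (p t)) := by
      refine Finset.sum_congr rfl fun t ht => ?_
      rw [Real.log_div (hmemA t ht).1.ne' (hmemA t ht).2.ne']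
    have arg_eq : ∑ t ∈ A, q t * (q t / p t) = ∑ t ∈ A, (q t)^2 / p t := by
      refine Finset.sum_congr rfl fun t ht => ?_
      field_simp
    rw [lhs_eq, arg_eq] at hjen
    calc ∑ t ∈ A, q t * (Real.log (q t) - Real.log (p t))
        ≤ Real.log (∑ t ∈ A, (q t)^2 / p t) := hjen
      _ ≤ Real.log (∑ t ∈ Finset.univ.filter (fun t => p t ≠ 0), (q t)^2 / p t) :=
          Real.log_le_log hposA hle

end PaninskiAux

/-- **Paninski's bias bound (Lemma 2 of the supplementary material).** For the
plug-in entropy estimate `Ĥ` based on an i.i.d. sample of size `m` from a pmf `p`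
on a finite type `𝒯`, the bias satisfies
`|H(p) - 𝔼[Ĥ]| ≤ log (1 + (card 𝒯 - 1)/m) ≤ (card 𝒯 - 1)/m`. -/
theorem plugin_entropy_bias_bound
    {𝒯 : Type*} [Fintype 𝒯] [DecidableEq 𝒯]
    (p : 𝒯 → ℝ) (hp : ∀ t, 0 ≤ p t) (hpsum : ∑ t, p t = 1)
    (m : ℕ) (hm : 0 < m)
    (phat : (Fin m → 𝒯) → 𝒯 → ℝ)
    (hphat : ∀ v t, phat v t = ((Finset.univ.filter fun i => v i = t).card : ℝ) / m)
    (Hhat : (Fin m → 𝒯) → ℝ)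
    (hHhat : ∀ v, Hhat v = ∑ t, -(phat v t) * Real.log (phat v t))
    (EH : ℝ)
    (hEH : EH = ∑ v : Fin m → 𝒯, (∏ i, p (v i)) * Hhat v) :
    |(∑ t, -(p t) * Real.log (p t)) - EH| ≤
        Real.log (1 + ((Fintype.card 𝒯 : ℝ) - 1) / m) ∧
      Real.log (1 + ((Fintype.card 𝒯 : ℝ) - 1) / m) ≤ ((Fintype.card 𝒯 : ℝ) - 1) / m := by
  classical
  have hm' : (m:ℝ) ≠ 0 := Nat.cast_ne_zero.2 hm.ne'
  have hmpos : (0:ℝ) < m := by positivity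
  -- the type is nonempty
  have hKpos : 0 < Fintype.card 𝒯 := by
    rcases isEmpty_or_nonempty 𝒯 with h | h
    · exfalso; rw [Finset.univ_eq_empty, Finset.sum_empty] at hpsum; norm_num at hpsum
    · exact Fintype.card_pos
  have hK1 : (1:ℝ) ≤ (Fintype.card 𝒯 : ℝ) := by exact_mod_cast hKpos
  have hxnn : (0:ℝ) ≤ ((Fintype.card 𝒯 : ℝ) - 1) / m := by
    apply div_nonneg (by linarith) hmpos.le
  -- second part of the conclusion
  have hsecond : Real.log (1 + ((Fintype.card 𝒯 : ℝ) - 1) / m)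
      ≤ ((Fintype.card 𝒯 : ℝ) - 1) / m := by
    have := Real.log_le_sub_one_of_pos (x := 1 + ((Fintype.card 𝒯 : ℝ) - 1) / m) (by linarith)
    linarith
  -- notation
  set w : (Fin m → 𝒯) → ℝ := fun v => ∏ i, p (v i) with hw
  have hw0 : ∀ v, 0 ≤ w v := fun v => Finset.prod_nonneg fun i _ => hp (v i)
  have hwsum : ∑ v : Fin m → 𝒯, w v = 1 := paninski_sum_w p hpsum m
  -- basic facts about phat
  have hphat0 : ∀ v t, 0 ≤ phat v t := by
    intro v t; rw [hphat]; positivity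
  have hphatsum : ∀ v : Fin m → 𝒯, ∑ t, phat v t = 1 := by
    intro v
    have hcard : ∑ t : 𝒯, ((Finset.univ.filter fun i => v i = t).card : ℝ) = (m : ℝ) := by
      have := Finset.card_eq_sum_card_fiberwise
        (f := v) (s := (Finset.univ : Finset (Fin m))) (t := (Finset.univ : Finset 𝒯))
        (fun i _ => Finset.mem_univ (v i))
      have := congrArg (fun n : ℕ => (n : ℝ)) this
      push_cast at this
      simpa using this.symm
    calc ∑ t, phat v t = ∑ t, ((Finset.univ.filter fun i => v i = t).card : ℝ) / m := by
          exact Finset.sum_congr rfl fun t _ => hphat v t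
      _ = (∑ t : 𝒯, ((Finset.univ.filter fun i => v i = t).card : ℝ)) / m := by
          rw [Finset.sum_div]
      _ = 1 := by rw [hcard]; field_simp
  have hsupp : ∀ v : Fin m → 𝒯, w v ≠ 0 → ∀ t, phat v t ≠ 0 → p t ≠ 0 := by
    intro v hwv t hq
    have hall : ∀ i, p (v i) ≠ 0 := by
      intro i
      exact (Finset.prod_ne_zero_iff.1 hwv) i (Finset.mem_univ i)
    rw [hphat] at hq
    have hcard : (Finset.univ.filter fun i => v i = t).card ≠ 0 := by
      intro h
      apply hq
      rw [h]
      simp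
    obtain ⟨i, hi⟩ := Finset.card_ne_zero.1 hcard
    have : v i = t := (Finset.mem_filter.1 hi).2
    rw [← this]
    exact hall i
  -- expected value of phat
  have E_phat : ∀ t, ∑ v : Fin m → 𝒯, w v * phat v t = p t := by
    intro t
    have h1 : ∀ v : Fin m → 𝒯, w v * phat v t
        = (w v * ((Finset.univ.filter fun i => v i = t).card : ℝ)) * (1/m) := by
      intro v; rw [hphat]; ring
    rw [Finset.sum_congr rfl fun v _ => h1 v, ← Finset.sum_mul, hw,
      paninski_E_c p hpsum m t]
    field_simp
  -- the per-sample relative entropy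
  set D : (Fin m → 𝒯) → ℝ :=
    fun v => ∑ t, phat v t * (Real.log (phat v t) - Real.log (p t)) with hD
  set r : (Fin m → 𝒯) → ℝ :=
    fun v => ∑ t ∈ Finset.univ.filter fun t => p t ≠ 0, (phat v t)^2 / p t with hr
  have hr0 : ∀ v, 0 ≤ r v := by
    intro v
    apply Finset.sum_nonneg
    intro t ht
    have hpt : 0 < p t := lt_of_le_of_ne (hp t) (Ne.symm (Finset.mem_filter.1 ht).2)
    positivity
  have hGJ : ∀ v : Fin m → 𝒯, w v ≠ 0 →
      0 ≤ D v ∧ D v ≤ Real.log (r v) ∧ 0 < r v := by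
    intro v hwv
    exact paninski_gibbs_jensen p (phat v) hp hpsum (hphat0 v) (hphatsum v) (hsupp v hwv)
  -- the key identity : bias = expected relative entropy
  have identity : (∑ t, -(p t) * Real.log (p t)) - EH = ∑ v : Fin m → 𝒯, w v * D v := by
    have h1 : ∑ v : Fin m → 𝒯, w v * D v
        = (∑ v : Fin m → 𝒯, ∑ t, w v * (phat v t * Real.log (phat v t)))
          - ∑ v : Fin m → 𝒯, ∑ t, (w v * phat v t) * Real.log (p t) := by
      rw [← Finset.sum_sub_distrib]
      refine Finset.sum_congr rfl fun v _ => ?_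
      rw [hD, Finset.mul_sum, ← Finset.sum_sub_distrib]
      refine Finset.sum_congr rfl fun t _ => ?_
      ring
    have h2 : ∑ v : Fin m → 𝒯, ∑ t, (w v * phat v t) * Real.log (p t)
        = ∑ t, p t * Real.log (p t) := by
      rw [Finset.sum_comm]
      refine Finset.sum_congr rfl fun t _ => ?_
      rw [← Finset.sum_mul, E_phat t]
    have h3 : ∑ v : Fin m → 𝒯, ∑ t, w v * (phat v t * Real.log (phat v t)) = -EH := by
      rw [hEH, ← Finset.sum_neg_distrib]
      refine Finset.sum_congr rfl fun v _ => ?_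
      rw [hHhat v, Finset.mul_sum, ← Finset.sum_neg_distrib]
      refine Finset.sum_congr rfl fun t _ => ?_
      ring
    rw [h1, h2, h3]
    have : ∑ t, -(p t) * Real.log (p t) = -∑ t, p t * Real.log (p t) := by
      rw [← Finset.sum_neg_distrib]
      exact Finset.sum_congr rfl fun t _ => by ring
    rw [this]
    ring
  -- nonnegativity of the bias
  have hBnonneg : 0 ≤ ∑ v : Fin m → 𝒯, w v * D v := by
    apply Finset.sum_nonneg
    intro v _
    by_cases hwv : w v = 0
    · rw [hwv, zero_mul]
    · exact mul_nonneg (hw0 v) (hGJ v hwv).1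
  -- expected value of r
  have hS : ∑ v : Fin m → 𝒯, w v * r v
      = 1 + (((Finset.univ.filter fun t : 𝒯 => p t ≠ 0).card : ℝ) - 1) / m := by
    have h1 : ∀ v : Fin m → 𝒯, w v * r v = (∏ j, p (v j)) *
        (∑ t ∈ Finset.univ.filter fun t => p t ≠ 0,
          ((((Finset.univ.filter fun i => v i = t).card : ℝ)) / m)^2 / p t) := by
      intro v
      rw [hr, hw]
      congr 1
      refine Finset.sum_congr rfl fun t _ => ?_
      rw [hphat]
    rw [Finset.sum_congr rfl fun v _ => h1 v]
    exact paninski_E_r p hpsum m hm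
  -- the support is nonempty
  have hsupp_ne : (Finset.univ.filter fun t : 𝒯 => p t ≠ 0).Nonempty := by
    by_contra h
    rw [Finset.not_nonempty_iff_eq_empty] at h
    have : ∑ t ∈ Finset.univ.filter fun t : 𝒯 => p t ≠ 0, p t = 1 := by
      rw [Finset.sum_filter_ne_zero]; exact hpsum
    rw [h, Finset.sum_empty] at this
    norm_num at this
  have hsupp_card1 : (1:ℝ) ≤ ((Finset.univ.filter fun t : 𝒯 => p t ≠ 0).card : ℝ) := by
    have := Finset.card_pos.2 hsupp_ne
    exact_mod_cast this
  have hsupp_cardK : ((Finset.univ.filter fun t : 𝒯 => p t ≠ 0).card : ℝ)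
      ≤ (Fintype.card 𝒯 : ℝ) := by
    have := Finset.card_filter_le (Finset.univ : Finset 𝒯) fun t => p t ≠ 0
    rw [Finset.card_univ] at this
    exact_mod_cast this
  have hSpos : (0:ℝ) < ∑ v : Fin m → 𝒯, w v * r v := by
    rw [hS]
    have : (0:ℝ) ≤ (((Finset.univ.filter fun t : 𝒯 => p t ≠ 0).card : ℝ) - 1) / m := by
      apply div_nonneg (by linarith) hmpos.le
    linarith
  have hSle : ∑ v : Fin m → 𝒯, w v * r v ≤ 1 + ((Fintype.card 𝒯 : ℝ) - 1) / m := by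
    rw [hS]
    have : (((Finset.univ.filter fun t : 𝒯 => p t ≠ 0).card : ℝ) - 1) / m
        ≤ ((Fintype.card 𝒯 : ℝ) - 1) / m := by
      gcongr
    linarith
  -- Jensen over the samples
  set W : Finset (Fin m → 𝒯) := Finset.univ.filter fun v => w v ≠ 0 with hW
  have hwW : ∑ v ∈ W, w v = 1 := by
    rw [hW, Finset.sum_filter_ne_zero]; exact hwsum
  have hBle : ∑ v : Fin m → 𝒯, w v * D v ≤ Real.log (1 + ((Fintype.card 𝒯 : ℝ) - 1) / m) := by
    have step1 : ∑ v : Fin m → 𝒯, w v * D v ≤ ∑ v : Fin m → 𝒯, w v * Real.log (r v) := by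
      apply Finset.sum_le_sum
      intro v _
      by_cases hwv : w v = 0
      · rw [hwv, zero_mul, zero_mul]
      · exact mul_le_mul_of_nonneg_left (hGJ v hwv).2.1 (hw0 v)
    have restrict : ∑ v : Fin m → 𝒯, w v * Real.log (r v)
        = ∑ v ∈ W, w v * Real.log (r v) := by
      rw [hW]
      refine (Finset.sum_filter_of_ne ?_).symm
      intro v _ h hw0'
      exact h (by rw [hw0']; ring)
    have hjen := (strictConcaveOn_log_Ioi.concaveOn).le_map_sum
      (t := W) (w := w) (p := r)
      (fun v _ => hw0 v) hwW
      (fun v hv => Set.mem_Ioi.2 (hGJ v (Finset.mem_filter.1 hv).2).2.2)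
    simp only [smul_eq_mul] at hjen
    have subsum : ∑ v ∈ W, w v * r v ≤ ∑ v : Fin m → 𝒯, w v * r v := by
      refine Finset.sum_le_sum_of_subset_of_nonneg (Finset.subset_univ W) ?_
      intro v _ _
      exact mul_nonneg (hw0 v) (hr0 v)
    have hWpos : 0 < ∑ v ∈ W, w v * r v := by
      have hWne : W.Nonempty := by
        by_contra h
        rw [Finset.not_nonempty_iff_eq_empty] at h
        rw [h, Finset.sum_empty] at hwW
        norm_num at hwW
      refine Finset.sum_pos' (fun v hv => mul_nonneg (hw0 v) (hr0 v)) ?_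
      obtain ⟨v, hv⟩ := hWne
      refine ⟨v, hv, ?_⟩
      have hwv : w v ≠ 0 := (Finset.mem_filter.1 hv).2
      exact mul_pos (lt_of_le_of_ne (hw0 v) (Ne.symm hwv)) (hGJ v hwv).2.2
    calc ∑ v : Fin m → 𝒯, w v * D v
        ≤ ∑ v ∈ W, w v * Real.log (r v) := by rw [← restrict]; exact step1
      _ ≤ Real.log (∑ v ∈ W, w v * r v) := hjen
      _ ≤ Real.log (∑ v : Fin m → 𝒯, w v * r v) := Real.log_le_log hWpos subsum
      _ ≤ Real.log (1 + ((Fintype.card 𝒯 : ℝ) - 1) / m) := Real.log_le_log hSpos hSle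
  refine ⟨?_, hsecond⟩
  rw [identity, abs_of_nonneg hBnonneg]
  exact hBle
end

section
/- Let 𝒳 be a finite type and 𝒴 a finite nonempty type. Let P and P̃ be pmfs on 𝒳 × 𝒴 that have the same marginal over 𝒳, i.e. ∑_y P(x, y) = ∑_y P̃(x, y) for all x, and suppose the ℓ1 distance satisfies ∑_{x, y} |P(x, y) − P̃(x, y)| ≤ ε for some real ε with 0 < ε ≤ 1/2. Then the conditional entropies satisfy |H_P(Y|X) − H_{P̃}(Y|X)| ≤ −ε * Real.log (ε / (card 𝒴)^3). -/
open Real Finset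

namespace CondEntAux

lemma eta_subadd {s t : ℝ} (hs : 0 ≤ s) (ht : 0 ≤ t) :
    negMulLog (s + t) ≤ negMulLog s + negMulLog t := by
  rcases eq_or_lt_of_le hs with h | h
  · simp [← h]
  rcases eq_or_lt_of_le ht with h' | h'
  · simp [← h']
  have h1 : Real.log s ≤ Real.log (s + t) := Real.log_le_log h (by linarith)
  have h2 : Real.log t ≤ Real.log (s + t) := Real.log_le_log h' (by linarith)
  simp only [negMulLog, neg_mul]
  nlinarith

lemma eta_tangent {a b : ℝ} (ha : 0 ≤ a) (hb : 0 < b) :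
    negMulLog a ≤ negMulLog b + (-Real.log b - 1) * (a - b) := by
  rcases eq_or_lt_of_le ha with h | h
  · simp only [← h, negMulLog_zero, negMulLog, neg_mul]
    nlinarith
  · have hba : 0 < b / a := div_pos hb h
    have hlog := Real.log_le_sub_one_of_pos hba
    rw [Real.log_div hb.ne' h.ne'] at hlog
    have h2 : a * (Real.log b - Real.log a) ≤ b - a := by
      have h3 := mul_le_mul_of_nonneg_left hlog h.le
      have h4 : a * (b / a - 1) = b - a := by field_simp
      linarith [h3, h4.le, h4.ge]
    simp only [negMulLog, neg_mul]
    nlinarith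

lemma eta_diff_le {a b : ℝ} (ha : 0 ≤ a) (hb : 0 ≤ b) (hb1 : b ≤ 1) :
    negMulLog a - negMulLog b ≤ negMulLog (max (a - b) 0) + max (b - a) 0 := by
  rcases le_total b a with h | h
  · rw [max_eq_left (by linarith), max_eq_right (by linarith)]
    have hsub := eta_subadd hb (sub_nonneg.mpr h)
    have h3 : b + (a - b) = a := by ring
    rw [h3] at hsub
    linarith
  · rw [max_eq_right (by linarith), max_eq_left (by linarith), negMulLog_zero]
    rcases eq_or_lt_of_le hb with hb0 | hb0
    · have ha0 : a = 0 := le_antisymm (hb0 ▸ h) ha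
      simp [ha0, ← hb0]
    · have ht := eta_tangent ha hb0
      have hlb : Real.log b ≤ 0 := Real.log_nonpos hb hb1
      nlinarith [mul_nonneg (neg_nonneg.mpr hlb) (sub_nonneg.mpr h)]

/-- Per-`x` bound at conditional scale. -/
lemma cond_diff_le {𝒴 : Type*} [Fintype 𝒴] [Nonempty 𝒴] (p q : 𝒴 → ℝ)
    (hp : ∀ y, 0 ≤ p y) (hq : ∀ y, 0 ≤ q y)
    (hp1 : ∑ y, p y = 1) (hq1 : ∑ y, q y = 1) :
    ∑ y, (negMulLog (p y) - negMulLog (q y)) ≤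
      (1 / 2 + Real.log (2 * (Fintype.card 𝒴 : ℝ)) / 2) * (∑ y, |p y - q y|)
        + negMulLog (∑ y, |p y - q y|) / 2 := by
  set M : ℝ := (Fintype.card 𝒴 : ℝ) with hMdef
  have hM1 : (1 : ℝ) ≤ M := by
    have h : 1 ≤ Fintype.card 𝒴 := Fintype.card_pos
    rw [hMdef]; exact_mod_cast h
  have hM0 : (0 : ℝ) < M := by linarith
  set δ := ∑ y, |p y - q y| with hδdef
  have hδ0 : 0 ≤ δ := Finset.sum_nonneg fun y _ => abs_nonneg _
  set τ : 𝒴 → ℝ := fun y => max (p y - q y) 0 with hτdef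
  have hτ0 : ∀ y, 0 ≤ τ y := fun y => le_max_right _ _
  have habs : ∀ c : ℝ, max c 0 = (c + |c|) / 2 := by
    intro c
    rcases le_total c 0 with h | h
    · rw [max_eq_right h, abs_of_nonpos h]; ring
    · rw [max_eq_left h, abs_of_nonneg h]; ring
  have hτsum : ∑ y, τ y = δ / 2 := by
    calc ∑ y, τ y = ∑ y, ((p y - q y) + |p y - q y|) / 2 := by
          exact Finset.sum_congr rfl fun y _ => habs _
      _ = ((∑ y, p y - ∑ y, q y) + δ) / 2 := by
          rw [← Finset.sum_div, Finset.sum_add_distrib, Finset.sum_sub_distrib]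
      _ = δ / 2 := by rw [hp1, hq1]; ring
  have hσsum : ∑ y, max (q y - p y) 0 = δ / 2 := by
    calc ∑ y, max (q y - p y) 0 = ∑ y, ((q y - p y) + |q y - p y|) / 2 := by
          exact Finset.sum_congr rfl fun y _ => habs _
      _ = ((∑ y, q y - ∑ y, p y) + ∑ y, |q y - p y|) / 2 := by
          rw [← Finset.sum_div, Finset.sum_add_distrib, Finset.sum_sub_distrib]
      _ = δ / 2 := by
          rw [hp1, hq1, hδdef]
          rw [show (∑ y, |q y - p y|) = ∑ y, |p y - q y| from
            Finset.sum_congr rfl fun y _ => abs_sub_comm _ _]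
          ring
  have hq1y : ∀ y, q y ≤ 1 := by
    intro y
    calc q y ≤ ∑ y', q y' := Finset.single_le_sum (fun y' _ => hq y') (mem_univ y)
      _ = 1 := hq1
  have step1 : ∑ y, (negMulLog (p y) - negMulLog (q y)) ≤ ∑ y, negMulLog (τ y) + δ / 2 := by
    have hle : ∀ y ∈ univ, negMulLog (p y) - negMulLog (q y) ≤
        negMulLog (τ y) + max (q y - p y) 0 :=
      fun y _ => eta_diff_le (hp y) (hq y) (hq1y y)
    calc ∑ y, (negMulLog (p y) - negMulLog (q y))
        ≤ ∑ y, (negMulLog (τ y) + max (q y - p y) 0) := Finset.sum_le_sum hle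
      _ = ∑ y, negMulLog (τ y) + δ / 2 := by rw [Finset.sum_add_distrib, hσsum]
  have jensen : ∑ y, negMulLog (τ y) ≤ M * negMulLog (δ / (2 * M)) := by
    have h := concaveOn_negMulLog.le_map_sum (t := (univ : Finset 𝒴))
      (w := fun _ : 𝒴 => M⁻¹) (p := τ)
      (fun _ _ => by positivity)
      (by simp only [Finset.sum_const, nsmul_eq_mul, Finset.card_univ, ← hMdef]
          exact mul_inv_cancel₀ hM0.ne')
      (fun y _ => hτ0 y)
    simp only [smul_eq_mul, ← Finset.mul_sum] at h
    rw [hτsum] at h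
    have h2 : M⁻¹ * (δ / 2) = δ / (2 * M) := by rw [inv_mul_eq_div, div_div]
    rw [h2] at h
    have h3 := mul_le_mul_of_nonneg_left h hM0.le
    rw [← mul_assoc, mul_inv_cancel₀ hM0.ne', one_mul] at h3
    exact h3
  have hident : M * negMulLog (δ / (2 * M)) =
      negMulLog δ / 2 + δ / 2 * Real.log (2 * M) := by
    rcases eq_or_lt_of_le hδ0 with h | h
    · simp [← h]
    · simp only [negMulLog, neg_mul]
      rw [Real.log_div h.ne' (by positivity)]
      field_simp
      ring
  calc ∑ y, (negMulLog (p y) - negMulLog (q y))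
      ≤ ∑ y, negMulLog (τ y) + δ / 2 := step1
    _ ≤ M * negMulLog (δ / (2 * M)) + δ / 2 := by linarith [jensen]
    _ = (1 / 2 + Real.log (2 * M) / 2) * δ + negMulLog δ / 2 := by
        rw [hident]; ring

/-- Key one-sided bound. -/
lemma key {𝒳 𝒴 : Type*} [Fintype 𝒳] [Fintype 𝒴] [Nonempty 𝒴]
    (P Q : 𝒳 × 𝒴 → ℝ)
    (hP : ∀ xy, 0 ≤ P xy) (hQ : ∀ xy, 0 ≤ Q xy)
    (hPsum : ∑ x, ∑ y, P (x, y) = 1)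
    (hmarg : ∀ x, ∑ y, P (x, y) = ∑ y, Q (x, y))
    (ε : ℝ) (hε0 : 0 < ε) (hε : ε ≤ 1 / 2)
    (hl1 : ∑ x, ∑ y, |P (x, y) - Q (x, y)| ≤ ε)
    (hcard : 2 ≤ Fintype.card 𝒴) :
    ∑ x, ∑ y, (negMulLog (P (x, y)) - negMulLog (Q (x, y))) ≤
      -ε * Real.log (ε / (Fintype.card 𝒴 : ℝ) ^ 3) := by
  set M : ℝ := (Fintype.card 𝒴 : ℝ) with hMdef
  have hM2 : (2 : ℝ) ≤ M := by rw [hMdef]; exact_mod_cast hcard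
  have hM0 : (0 : ℝ) < M := by linarith
  set c : ℝ := 1 / 2 + Real.log (2 * M) / 2 with hcdef
  set φ : ℝ → ℝ := fun u => c * u + negMulLog u / 2 with hφdef
  set w : 𝒳 → ℝ := fun x => ∑ y, P (x, y) with hwdef
  set d : 𝒳 → ℝ := fun x => ∑ y, |P (x, y) - Q (x, y)| with hddef
  set δ : 𝒳 → ℝ := fun x => if w x = 0 then 0 else d x / w x with hδdef
  have hw0 : ∀ x, 0 ≤ w x := fun x => Finset.sum_nonneg fun y _ => hP (x, y)
  have hd0 : ∀ x, 0 ≤ d x := fun x => Finset.sum_nonneg fun y _ => abs_nonneg _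
  have hδ0 : ∀ x, 0 ≤ δ x := by
    intro x
    by_cases h : w x = 0
    · rw [hδdef]; dsimp only; rw [if_pos h]
    · rw [hδdef]; dsimp only; rw [if_neg h]
      exact div_nonneg (hd0 x) (hw0 x)
  -- zero-marginal rows are identically zero
  have hzero : ∀ x, w x = 0 → (∀ y, P (x, y) = 0 ∧ Q (x, y) = 0) := by
    intro x hx y
    constructor
    · exact (Finset.sum_eq_zero_iff_of_nonneg (fun y' _ => hP (x, y'))).mp hx y (mem_univ y)
    · have hx' : ∑ y', Q (x, y') = 0 := by rw [← hmarg x]; exact hx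
      exact (Finset.sum_eq_zero_iff_of_nonneg (fun y' _ => hQ (x, y'))).mp hx' y (mem_univ y)
  -- claim 1 : per-x bound
  have claim1 : ∀ x, ∑ y, (negMulLog (P (x, y)) - negMulLog (Q (x, y))) ≤ w x * φ (δ x) := by
    intro x
    rcases eq_or_lt_of_le (hw0 x) with hwx | hwx
    · have hz := hzero x hwx.symm
      have : ∀ y ∈ (univ : Finset 𝒴), negMulLog (P (x, y)) - negMulLog (Q (x, y)) = 0 := by
        intro y _
        rw [(hz y).1, (hz y).2, negMulLog_zero, sub_self]
      rw [Finset.sum_congr rfl this, Finset.sum_const, ← hwx]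
      simp
    · set p : 𝒴 → ℝ := fun y => P (x, y) / w x with hpdef
      set q : 𝒴 → ℝ := fun y => Q (x, y) / w x with hqdef
      have hp : ∀ y, 0 ≤ p y := fun y => div_nonneg (hP (x, y)) (hw0 x)
      have hq : ∀ y, 0 ≤ q y := fun y => div_nonneg (hQ (x, y)) (hw0 x)
      have hp1 : ∑ y, p y = 1 := by
        rw [hpdef]
        dsimp only
        rw [← Finset.sum_div]
        exact div_self hwx.ne'
      have hq1 : ∑ y, q y = 1 := by
        rw [hqdef]
        dsimp only
        rw [← Finset.sum_div, ← hmarg x]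
        exact div_self hwx.ne'
      have habsq : ∑ y, |p y - q y| = d x / w x := by
        rw [hddef]
        dsimp only
        rw [Finset.sum_div]
        refine Finset.sum_congr rfl fun y _ => ?_
        rw [hpdef, hqdef]
        dsimp only
        rw [div_sub_div_same, abs_div, abs_of_pos hwx]
      have hcond := cond_diff_le p q hp hq hp1 hq1
      rw [habsq, ← hMdef, ← hcdef] at hcond
      have hPsplit : ∀ y, negMulLog (P (x, y)) = p y * negMulLog (w x) + w x * negMulLog (p y) := by
        intro y
        have : P (x, y) = w x * p y := by
          rw [hpdef]; dsimp only; field_simp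
        rw [this, negMulLog_mul]
      have hQsplit : ∀ y, negMulLog (Q (x, y)) = q y * negMulLog (w x) + w x * negMulLog (q y) := by
        intro y
        have : Q (x, y) = w x * q y := by
          rw [hqdef]; dsimp only; field_simp
        rw [this, negMulLog_mul]
      have hsum : ∑ y, (negMulLog (P (x, y)) - negMulLog (Q (x, y)))
          = w x * ∑ y, (negMulLog (p y) - negMulLog (q y)) := by
        calc ∑ y, (negMulLog (P (x, y)) - negMulLog (Q (x, y)))
            = ∑ y, ((p y - q y) * negMulLog (w x)
                + w x * (negMulLog (p y) - negMulLog (q y))) := by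
              refine Finset.sum_congr rfl fun y _ => ?_
              rw [hPsplit y, hQsplit y]; ring
          _ = (∑ y, (p y - q y)) * negMulLog (w x)
                + w x * ∑ y, (negMulLog (p y) - negMulLog (q y)) := by
              rw [Finset.sum_add_distrib, ← Finset.sum_mul, ← Finset.mul_sum]
          _ = w x * ∑ y, (negMulLog (p y) - negMulLog (q y)) := by
              rw [Finset.sum_sub_distrib, hp1, hq1]; ring
      rw [hsum]
      have hδx : δ x = d x / w x := by
        rw [hδdef]; dsimp only; rw [if_neg hwx.ne']
      rw [hδx, hφdef]
      dsimp only
      exact mul_le_mul_of_nonneg_left hcond (hw0 x)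
  -- concavity of φ
  have hφconc : ConcaveOn ℝ (Set.Ici (0 : ℝ)) φ := by
    have h1 : ConcaveOn ℝ (Set.Ici (0 : ℝ)) (fun u : ℝ => c * u) := by
      refine ⟨convex_Ici 0, fun x _ y _ a b _ _ _ => ?_⟩
      simp only [smul_eq_mul]
      ring_nf
      exact le_refl _
    have h2 : ConcaveOn ℝ (Set.Ici (0 : ℝ)) (fun u : ℝ => negMulLog u / 2) := by
      have := concaveOn_negMulLog.smul (c := (1 / 2 : ℝ)) (by norm_num)
      convert this using 2 with u
      · rfl
      · rfl
      · rw [smul_eq_mul]; ring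
    exact h1.add h2
  -- claim 2 : w x * δ x = d x
  have claim2 : ∀ x, w x * δ x = d x := by
    intro x
    by_cases h : w x = 0
    · rw [hδdef]
      dsimp only
      rw [if_pos h, mul_zero]
      symm
      rw [hddef]
      dsimp only
      refine Finset.sum_eq_zero fun y _ => ?_
      rw [(hzero x h y).1, (hzero x h y).2, sub_self, abs_zero]
    · rw [hδdef]
      dsimp only
      rw [if_neg h]
      field_simp
  -- outer Jensen
  have hD0 : 0 ≤ ∑ x, d x := Finset.sum_nonneg fun x _ => hd0 x
  have hDε : ∑ x, d x ≤ ε := hl1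
  have jensen : ∑ x, w x * φ (δ x) ≤ φ (∑ x, d x) := by
    have h := hφconc.le_map_sum (t := (univ : Finset 𝒳)) (w := w) (p := δ)
      (fun x _ => hw0 x) hPsum (fun x _ => hδ0 x)
    simp only [smul_eq_mul] at h
    have h2 : ∑ x, w x * δ x = ∑ x, d x := Finset.sum_congr rfl fun x _ => claim2 x
    rwa [h2] at h
  -- final arithmetic
  have hfinal : φ (∑ x, d x) ≤ -ε * Real.log (ε / M ^ 3) := by
    set D := ∑ x, d x with hDdef
    have hrhs : -ε * Real.log (ε / M ^ 3) = -ε * Real.log ε + 3 * ε * Real.log M := by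
      rw [Real.log_div hε0.ne' (by positivity), Real.log_pow]
      push_cast
      ring
    have hlogε : Real.log ε ≤ -Real.log 2 := by
      have h := Real.log_le_log hε0 hε
      rwa [show (1 : ℝ) / 2 = 2⁻¹ by norm_num, Real.log_inv] at h
    have hlog2 : (0.6931471803 : ℝ) < Real.log 2 := Real.log_two_gt_d9
    have hlogM : Real.log 2 ≤ Real.log M := Real.log_le_log two_pos hM2
    have hlog2M : Real.log (2 * M) = Real.log 2 + Real.log M :=
      Real.log_mul two_ne_zero hM0.ne'
    -- tangent bound : negMulLog D ≤ negMulLog ε + (1 - log 2) * (ε - D)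
    have htang : negMulLog D ≤ negMulLog ε + (1 - Real.log 2) * (ε - D) := by
      have ht := eta_tangent hD0 hε0
      have hA : -(1 - Real.log 2) ≤ -Real.log ε - 1 := by linarith
      have hprod : (-Real.log ε - 1) * (D - ε) ≤ (1 - Real.log 2) * (ε - D) := by
        nlinarith [sub_nonneg.mpr hDε]
      linarith
    have hηε : ε * Real.log 2 ≤ -ε * Real.log ε := by nlinarith
    rw [hrhs, hφdef, hcdef]
    dsimp only
    rw [hlog2M]
    have hεη : negMulLog ε = -ε * Real.log ε := rfl
    rw [hεη] at htang
    have hl2lt : Real.log 2 < 1 := by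
      have := Real.log_two_lt_d9
      linarith
    have hl2pos : (0 : ℝ) < Real.log 2 := by linarith
    have h1 : (1 / 2 + (Real.log 2 + Real.log M) / 2) * D
        ≤ (1 / 2 + (Real.log 2 + Real.log M) / 2) * ε :=
      mul_le_mul_of_nonneg_left hDε (by linarith)
    have h2 : (1 - Real.log 2) * (ε - D) ≤ (1 - Real.log 2) * ε :=
      mul_le_mul_of_nonneg_left (by linarith) (by linarith)
    have h3 : ε * Real.log 2 ≤ ε * Real.log M := mul_le_mul_of_nonneg_left hlogM hε0.le
    have h4 : 0 ≤ ε * (3 * Real.log 2 - 1) := mul_nonneg hε0.le (by linarith)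
    linarith [htang, hηε, h1, h2, h3, h4]
  calc ∑ x, ∑ y, (negMulLog (P (x, y)) - negMulLog (Q (x, y)))
      ≤ ∑ x, w x * φ (δ x) := Finset.sum_le_sum fun x _ => claim1 x
    _ ≤ φ (∑ x, d x) := jensen
    _ ≤ -ε * Real.log (ε / M ^ 3) := hfinal
lemma entropy_eq {𝒳 𝒴 : Type*} [Fintype 𝒳] [Fintype 𝒴] (P : 𝒳 × 𝒴 → ℝ)
    (hP : ∀ xy, 0 ≤ P xy) (x : 𝒳) :
    ∑ y, P (x, y) * Real.log ((∑ y', P (x, y')) / P (x, y)) =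
      (∑ y, negMulLog (P (x, y))) - negMulLog (∑ y, P (x, y)) := by
  have hterm : ∀ y, P (x, y) * Real.log ((∑ y', P (x, y')) / P (x, y)) =
      P (x, y) * Real.log (∑ y', P (x, y')) + negMulLog (P (x, y)) := by
    intro y
    rcases eq_or_lt_of_le (hP (x, y)) with h | h
    · simp [← h]
    · have hw : 0 < ∑ y', P (x, y') :=
        lt_of_lt_of_le h (Finset.single_le_sum (fun y' _ => hP (x, y')) (mem_univ y))
      rw [Real.log_div hw.ne' h.ne']
      simp only [negMulLog, neg_mul]
      ring
  rw [Finset.sum_congr rfl fun y _ => hterm y, Finset.sum_add_distrib, ← Finset.sum_mul]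
  simp only [negMulLog, neg_mul]
  ring

end CondEntAux

open CondEntAux in
/-- **Lemma 3 of the supplementary material (Kolchinsky et al., discrete form).**
If two joint pmfs `P, P̃` on `𝒳 × 𝒴` have the same marginal over `𝒳` and
ℓ1 distance at most `ε ≤ 1/2`, then their conditional entropies
`H(Y|X) = ∑_{x,y} P(x,y) log (P_X x / P(x,y))` differ by at most
`-ε log (ε / (card 𝒴)^3)`. -/
theorem conditional_entropy_close_of_l1_close
    {𝒳 𝒴 : Type*} [Fintype 𝒳] [Fintype 𝒴] [Nonempty 𝒴]
    (P Pt : 𝒳 × 𝒴 → ℝ)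
    (hP : ∀ xy, 0 ≤ P xy) (hPsum : ∑ x, ∑ y, P (x, y) = 1)
    (hPt : ∀ xy, 0 ≤ Pt xy) (hPtsum : ∑ x, ∑ y, Pt (x, y) = 1)
    (hmarg : ∀ x, ∑ y, P (x, y) = ∑ y, Pt (x, y))
    (ε : ℝ) (hε0 : 0 < ε) (hε : ε ≤ 1 / 2)
    (hl1 : ∑ x, ∑ y, |P (x, y) - Pt (x, y)| ≤ ε) :
    |(∑ x, ∑ y, P (x, y) * Real.log ((∑ y', P (x, y')) / P (x, y))) -
        (∑ x, ∑ y, Pt (x, y) * Real.log ((∑ y', Pt (x, y')) / Pt (x, y)))| ≤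
      -ε * Real.log (ε / (Fintype.card 𝒴 : ℝ) ^ 3) := by
  by_cases hcard : 2 ≤ Fintype.card 𝒴
  · -- rewrite both entropies
    have hdiff : (∑ x, ∑ y, P (x, y) * Real.log ((∑ y', P (x, y')) / P (x, y))) -
        (∑ x, ∑ y, Pt (x, y) * Real.log ((∑ y', Pt (x, y')) / Pt (x, y)))
        = ∑ x, ∑ y, (negMulLog (P (x, y)) - negMulLog (Pt (x, y))) := by
      rw [Finset.sum_congr rfl fun x _ => entropy_eq P hP x,
        Finset.sum_congr rfl fun x _ => entropy_eq Pt hPt x]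
      rw [Finset.sum_sub_distrib, Finset.sum_sub_distrib]
      rw [show (∑ x, negMulLog (∑ y, P (x, y))) = ∑ x, negMulLog (∑ y, Pt (x, y)) from
        Finset.sum_congr rfl fun x _ => by rw [hmarg x]]
      rw [show (∑ x, ∑ y, (negMulLog (P (x, y)) - negMulLog (Pt (x, y))))
          = ∑ x, ((∑ y, negMulLog (P (x, y))) - ∑ y, negMulLog (Pt (x, y))) from
        Finset.sum_congr rfl fun x _ => Finset.sum_sub_distrib _ _]
      rw [Finset.sum_sub_distrib]
      ring
    rw [hdiff, abs_le]
    constructor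
    · have hl1' : ∑ x, ∑ y, |Pt (x, y) - P (x, y)| ≤ ε := by
        rw [show (∑ x, ∑ y, |Pt (x, y) - P (x, y)|) = ∑ x, ∑ y, |P (x, y) - Pt (x, y)| from
          Finset.sum_congr rfl fun x _ => Finset.sum_congr rfl fun y _ => abs_sub_comm _ _]
        exact hl1
      have h := key Pt P hPt hP hPtsum (fun x => (hmarg x).symm) ε hε0 hε hl1' hcard
      have e1 : ∀ F G : 𝒳 → 𝒴 → ℝ, ∑ x, ∑ y, (F x y - G x y)
          = (∑ x, ∑ y, F x y) - ∑ x, ∑ y, G x y := by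
        intro F G
        rw [← Finset.sum_sub_distrib]
        exact Finset.sum_congr rfl fun x _ => Finset.sum_sub_distrib _ _
      rw [e1] at h ⊢
      linarith
    · exact key P Pt hP hPt hPsum hmarg ε hε0 hε hl1 hcard
  · -- card 𝒴 = 1 : P = Pt
    have hc1 : Fintype.card 𝒴 = 1 := by
      have := Fintype.card_pos (α := 𝒴)
      omega
    obtain ⟨y₀, hy₀⟩ := Fintype.card_eq_one_iff.mp hc1
    have hsum1 : ∀ f : 𝒴 → ℝ, ∑ y, f y = f y₀ := by
      intro f
      rw [show (univ : Finset 𝒴) = {y₀} from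
        Finset.eq_singleton_iff_unique_mem.mpr ⟨mem_univ _, fun y _ => hy₀ y⟩,
        Finset.sum_singleton]
    have hPQ : P = Pt := by
      funext xy
      obtain ⟨x, y⟩ := xy
      have h1 := hmarg x
      rw [hsum1 (fun y => P (x, y)), hsum1 (fun y => Pt (x, y))] at h1
      rw [hy₀ y]
      exact h1
    rw [hPQ, sub_self, abs_zero]
    have hM1 : (1 : ℝ) ≤ (Fintype.card 𝒴 : ℝ) ^ 3 := by
      rw [hc1]; norm_num
    have hlog : Real.log (ε / (Fintype.card 𝒴 : ℝ) ^ 3) ≤ 0 := by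
      apply Real.log_nonpos
      · positivity
      · calc ε / (Fintype.card 𝒴 : ℝ) ^ 3 ≤ ε := div_le_self hε0.le hM1
          _ ≤ 1 := by linarith
    nlinarith [hlog, hε0]
end

section
/- Let 𝒳 be a finite type and 𝒴 a finite nonempty type, and let f : 𝒳 → 𝒴. Let P be the pmf on 𝒳 × 𝒴 under which Y is the deterministic function f of X, i.e. P(x, y) = p_X(x) if y = f(x) and 0 otherwise, where p_X is a pmf on 𝒳. Let P̃ be a pmf on 𝒳 × 𝒴 with the same marginal over 𝒳 as P, i.e. ∑_y P̃(x, y) = p_X(x) for all x, and suppose ∑_{x, y} |P̃(x, y) − P(x, y)| ≤ ε for some real ε with 0 < ε ≤ 1/2. Then the conditional entropy under P̃ satisfies |H_{P̃}(Y|X)| ≤ −ε * Real.log (ε / (card 𝒴)^3). -/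
open Finset

lemma aux_nonneg (q m : ℝ) (hq : 0 ≤ q) (hm : q ≤ m) : 0 ≤ q * Real.log (m / q) := by
  rcases eq_or_lt_of_le hq with h | h
  · simp [← h]
  · exact mul_nonneg hq (Real.log_nonneg ((one_le_div h).mpr hm))

lemma aux_diag (q m : ℝ) (hq : 0 ≤ q) (hm : q ≤ m) : q * Real.log (m / q) ≤ m - q := by
  rcases eq_or_lt_of_le hq with h | h
  · simp [← h]; linarith
  · have hm0 : 0 < m := lt_of_lt_of_le h hm
    have h1 := Real.log_le_sub_one_of_pos (div_pos hm0 h)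
    have h2 : q * Real.log (m / q) ≤ q * (m / q - 1) := by nlinarith
    calc q * Real.log (m / q) ≤ q * (m / q - 1) := h2
    _ = m - q := by field_simp

lemma aux_off (q m c : ℝ) (hq : 0 ≤ q) (hm : q ≤ m) (hc : 0 < c) :
    q * Real.log (m / q) ≤ q * Real.log c + m / c - q := by
  rcases eq_or_lt_of_le hq with h | h
  · have : 0 ≤ m / c := div_nonneg (le_trans hq hm) hc.le
    simp [← h]; linarith
  · have hm0 : 0 < m := lt_of_lt_of_le h hm
    have key : Real.log (m / q) = Real.log c + Real.log (m / (q * c)) := by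
      rw [Real.log_div hm0.ne' (mul_pos h hc).ne', Real.log_mul h.ne' hc.ne',
        Real.log_div hm0.ne' h.ne']
      ring
    have h1 := Real.log_le_sub_one_of_pos (div_pos hm0 (mul_pos h hc))
    have h2 : q * (m / (q * c)) = m / c := by field_simp
    rw [key]
    nlinarith



/-- **Corollary 1 of the paper (discrete form).** Let `P` be the joint pmf on
`𝒳 × 𝒴` under which `Y = f X` is a deterministic function of `X`, and let `P̃`
be a joint pmf with the same `𝒳`-marginal and ℓ1 distance at most `ε ≤ 1/2`
from `P`. Then the conditional entropy under `P̃` satisfies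
`|H_{P̃}(Y|X)| ≤ -ε log (ε / (card 𝒴)^3)`. -/
theorem conditional_entropy_small_of_close_to_deterministic
    {𝒳 𝒴 : Type*} [Fintype 𝒳] [Fintype 𝒴] [Nonempty 𝒴] [DecidableEq 𝒴]
    (f : 𝒳 → 𝒴)
    (pX : 𝒳 → ℝ) (hpX : ∀ x, 0 ≤ pX x) (hpXsum : ∑ x, pX x = 1)
    (P : 𝒳 × 𝒴 → ℝ)
    (hP : ∀ x y, P (x, y) = if y = f x then pX x else 0)
    (Pt : 𝒳 × 𝒴 → ℝ)
    (hPt : ∀ xy, 0 ≤ Pt xy) (hPtsum : ∑ x, ∑ y, Pt (x, y) = 1)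
    (hmarg : ∀ x, ∑ y, Pt (x, y) = pX x)
    (ε : ℝ) (hε0 : 0 < ε) (hε : ε ≤ 1 / 2)
    (hl1 : ∑ x, ∑ y, |Pt (x, y) - P (x, y)| ≤ ε) :
    |∑ x, ∑ y, Pt (x, y) * Real.log ((∑ y', Pt (x, y')) / Pt (x, y))| ≤
      -ε * Real.log (ε / (Fintype.card 𝒴 : ℝ) ^ 3) := by
  classical
  have hPtle : ∀ x y, Pt (x, y) ≤ pX x := by
    intro x y
    rw [← hmarg x]
    exact Finset.single_le_sum (fun y _ => hPt _) (mem_univ y)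
  -- rewrite the marginal
  have hHrw : (∑ x, ∑ y, Pt (x, y) * Real.log ((∑ y', Pt (x, y')) / Pt (x, y)))
      = ∑ x, ∑ y, Pt (x, y) * Real.log (pX x / Pt (x, y)) := by
    refine Finset.sum_congr rfl fun x _ => ?_
    simp only [hmarg]
  have hHnn : 0 ≤ ∑ x, ∑ y, Pt (x, y) * Real.log (pX x / Pt (x, y)) :=
    Finset.sum_nonneg fun x _ => Finset.sum_nonneg fun y _ =>
      aux_nonneg _ _ (hPt _) (hPtle x y)
  rw [hHrw, abs_of_nonneg hHnn]
  rcases le_or_gt (Fintype.card 𝒴) 1 with hc1 | hc2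
  · -- |𝒴| = 1 : entropy is zero
    haveI : Subsingleton 𝒴 := Fintype.card_le_one_iff_subsingleton.mp hc1
    have hH0 : (∑ x, ∑ y, Pt (x, y) * Real.log (pX x / Pt (x, y))) = 0 := by
      refine Finset.sum_eq_zero fun x _ => Finset.sum_eq_zero fun y _ => ?_
      have hy : y = f x := Subsingleton.elim _ _
      have hm : pX x = Pt (x, y) := by
        rw [← hmarg x]
        exact (Finset.sum_eq_single_of_mem y (mem_univ y)
          (fun b _ hb => absurd (Subsingleton.elim b y) hb))
      rcases eq_or_ne (Pt (x, y)) 0 with h | h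
      · rw [h, zero_mul]
      · rw [hm, div_self h, Real.log_one, mul_zero]
    rw [hH0]
    have hcard : (Fintype.card 𝒴 : ℝ) = 1 := by
      have h1 := Fintype.card_pos (α := 𝒴)
      have : Fintype.card 𝒴 = 1 := le_antisymm hc1 h1
      rw [this]; norm_num
    rw [hcard]
    have hlog : Real.log (ε / 1 ^ 3) ≤ 0 :=
      Real.log_nonpos (by positivity) (by norm_num; linarith)
    nlinarith
  · -- main case: |𝒴| ≥ 2
    set K : ℝ := (Fintype.card 𝒴 : ℝ) with hKdef
    have hK2 : (2:ℝ) ≤ K := by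
      have h2 : 2 ≤ Fintype.card 𝒴 := hc2
      rw [hKdef]; exact_mod_cast h2
    have hK0 : (0:ℝ) < K := by linarith
    set c : ℝ := K / ε with hcdef
    have hc0 : 0 < c := div_pos hK0 hε0
    have hlogc : 0 ≤ Real.log c :=
      Real.log_nonneg (by rw [le_div_iff₀ hε0]; linarith)
    -- per-x facts
    have herase : ∀ x, ∑ y ∈ univ.erase (f x), Pt (x, y) = pX x - Pt (x, f x) := by
      intro x
      have := Finset.add_sum_erase univ (fun y => Pt (x, y)) (mem_univ (f x))
      rw [hmarg x] at this
      linarith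
    have hSnn : ∀ x, 0 ≤ pX x - Pt (x, f x) := fun x => by
      have := hPtle x (f x); linarith
    -- ℓ1 distance equals 2 * p
    have hl1x : ∀ x, ∑ y, |Pt (x, y) - P (x, y)| = 2 * (pX x - Pt (x, f x)) := by
      intro x
      rw [← Finset.add_sum_erase univ (fun y => |Pt (x, y) - P (x, y)|) (mem_univ (f x))]
      have h1 : |Pt (x, f x) - P (x, f x)| = pX x - Pt (x, f x) := by
        rw [hP x (f x), if_pos rfl, abs_sub_comm, abs_of_nonneg (hSnn x)]
      have h2 : ∑ y ∈ univ.erase (f x), |Pt (x, y) - P (x, y)|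
          = pX x - Pt (x, f x) := by
        rw [← herase x]
        refine Finset.sum_congr rfl fun y hy => ?_
        rw [hP x y, if_neg (Finset.ne_of_mem_erase hy), sub_zero,
          abs_of_nonneg (hPt _)]
      rw [h1, h2]; ring
    set p : ℝ := ∑ x, (pX x - Pt (x, f x)) with hpdef
    have hp0 : 0 ≤ p := Finset.sum_nonneg fun x _ => hSnn x
    have hpε : 2 * p ≤ ε := by
      calc 2 * p = ∑ x, ∑ y, |Pt (x, y) - P (x, y)| := by
            rw [hpdef, Finset.mul_sum]
            exact (Finset.sum_congr rfl fun x _ => (hl1x x).symm)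
      _ ≤ ε := hl1
    -- main entropy bound
    have hcast : ((Fintype.card 𝒴 - 1 : ℕ) : ℝ) = K - 1 := by
      rw [Nat.cast_sub (by omega)]; norm_num; rfl
    have hmain : (∑ x, ∑ y, Pt (x, y) * Real.log (pX x / Pt (x, y)))
        ≤ p * Real.log c + (K - 1) * (1 / c) := by
      have step1 : ∀ x, ∑ y, Pt (x, y) * Real.log (pX x / Pt (x, y))
          ≤ (pX x - Pt (x, f x)) * Real.log c + (K - 1) * (pX x / c) := by
        intro x
        rw [← Finset.add_sum_erase univ
          (fun y => Pt (x, y) * Real.log (pX x / Pt (x, y))) (mem_univ (f x))]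
        have hd : Pt (x, f x) * Real.log (pX x / Pt (x, f x)) ≤ pX x - Pt (x, f x) :=
          aux_diag _ _ (hPt _) (hPtle x (f x))
        have ho : ∑ y ∈ univ.erase (f x), Pt (x, y) * Real.log (pX x / Pt (x, y))
            ≤ ∑ y ∈ univ.erase (f x), (Pt (x, y) * Real.log c + pX x / c - Pt (x, y)) :=
          Finset.sum_le_sum fun y _ => aux_off _ _ _ (hPt _) (hPtle x y) hc0
        have hsum : ∑ y ∈ univ.erase (f x),
            (Pt (x, y) * Real.log c + pX x / c - Pt (x, y))
            = (pX x - Pt (x, f x)) * Real.log c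
              + (K - 1) * (pX x / c) - (pX x - Pt (x, f x)) := by
          rw [Finset.sum_sub_distrib, Finset.sum_add_distrib, ← Finset.sum_mul,
            herase x, Finset.sum_const, Finset.card_erase_of_mem (mem_univ (f x)),
            Finset.card_univ, nsmul_eq_mul, hcast]
        rw [hsum] at ho
        linarith
      calc (∑ x, ∑ y, Pt (x, y) * Real.log (pX x / Pt (x, y)))
          ≤ ∑ x, ((pX x - Pt (x, f x)) * Real.log c + (K - 1) * (pX x / c)) :=
            Finset.sum_le_sum fun x _ => step1 x
      _ = p * Real.log c + (K - 1) * (1 / c) := by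
            rw [Finset.sum_add_distrib, ← Finset.sum_mul]
            congr 1
            rw [← Finset.mul_sum]
            congr 1
            rw [← Finset.sum_div, hpXsum]
    -- arithmetic finish
    have hrhs : -ε * Real.log (ε / K ^ 3) = ε * (3 * Real.log K - Real.log ε) := by
      rw [Real.log_div hε0.ne' (by positivity), Real.log_pow]
      push_cast; ring
    have hlogceq : Real.log c = Real.log K - Real.log ε :=
      Real.log_div hK0.ne' hε0.ne'
    have hlK : Real.log 2 ≤ Real.log K := Real.log_le_log (by norm_num) hK2
    have hlε : Real.log ε ≤ -Real.log 2 := by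
      have := Real.log_le_log hε0 hε
      rwa [show (1:ℝ)/2 = 2⁻¹ by norm_num, Real.log_inv] at this
    have hl2 : (0.6931 : ℝ) ≤ Real.log 2 := by
      have := Real.log_two_gt_d9; linarith
    have hKc : (K - 1) * (1 / c) ≤ ε := by
      rw [hcdef, one_div_div]
      have heq : (K - 1) * (ε / K) = ε * ((K - 1) / K) := by ring
      rw [heq]
      nlinarith [div_le_one_of_le₀ (by linarith : K - 1 ≤ K) hK0.le]
    rw [hrhs]
    have h1 : p * Real.log c ≤ (ε / 2) * Real.log c :=
      mul_le_mul_of_nonneg_right (by linarith) hlogc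
    rw [hlogceq] at h1
    nlinarith [mul_le_mul_of_nonneg_left hlK hε0.le,
      mul_le_mul_of_nonneg_left hlε hε0.le]
end
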